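/- arXiv:1512.07449 — 9 statements merged into one kernel-verified Lean document; each statement's English description precedes it below -/
import Mathlib

section
/- Let V : ℝ → ℝ be continuous on the compact interval [A₁, B₁] and f : ℝ → ℝ be continuous on the compact interval [A₂, B₂], with A₁ ≤ B₁ and A₂ ≤ B₂. Then the superposition (V ⊞ f), defined on [A₁ + A₂, B₁ + B₂] by (V ⊞ f)(q) = inf { V(x) + f(y) : x ∈ [A₁, B₁], y ∈ [A₂, B₂], x + y = q }, is continuous on [A₁ + A₂, B₁ + B₂] (and the infimum is attained for every q in this interval). -/
/-!
For fixed `q`, the admissible first coordinates `x` form the interval `[A₁, B₁] ∩ [q - B₂, q - A₂]`,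
and clamping `t ∈ [A₁, B₁]` to `[q - B₂, q - A₂]` maps `[A₁, B₁]` onto it, jointly continuously
in `(q, t)`. So the set of values `V x + f y` over the fibre `x + y = q` is the image of the fixed
compact interval `[A₁, B₁]` under a jointly continuous function, once `V` and `f` are extended
continuously to `ℝ`; its infimum is then attained and depends continuously on `q`.
-/

open Set

theorem ContinuousOn.exists_continuous_eqOn_Icc {α β : Type*} [LinearOrder α] [TopologicalSpace α]
    [OrderTopology α] [TopologicalSpace β] {a b : α} {g : α → β} (hab : a ≤ b)
    (hg : ContinuousOn g (Icc a b)) : ∃ g' : α → β, Continuous g' ∧ EqOn g g' (Icc a b) :=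
  ⟨IccExtend hab ((Icc a b).domRestrict g),
    (continuousOn_iff_continuous_domRestrict.mp hg).Icc_extend',
    fun _ hx => (IccExtend_of_mem hab ((Icc a b).domRestrict g) hx).symm⟩

namespace Superposition

variable {A₁ B₁ A₂ B₂ q t : ℝ} {V f : ℝ → ℝ}

def valueSet (V f : ℝ → ℝ) (A₁ B₁ A₂ B₂ q : ℝ) : Set ℝ :=
  {z | ∃ x ∈ Icc A₁ B₁, ∃ y ∈ Icc A₂ B₂, x + y = q ∧ z = V x + f y}

def fiberProj (A₂ B₂ q t : ℝ) : ℝ := max (q - B₂) (min (q - A₂) t)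

theorem continuous_fiberProj : Continuous fun p : ℝ × ℝ => fiberProj A₂ B₂ p.1 p.2 := by
  unfold fiberProj
  fun_prop

theorem fiberProj_mem (h₂ : A₂ ≤ B₂) (hq : q ∈ Icc (A₁ + A₂) (B₁ + B₂)) (ht : t ∈ Icc A₁ B₁) :
    fiberProj A₂ B₂ q t ∈ Icc A₁ B₁ ∧ q - fiberProj A₂ B₂ q t ∈ Icc A₂ B₂ := by
  obtain ⟨hq₁, hq₂⟩ := hq
  obtain ⟨ht₁, ht₂⟩ := ht
  unfold fiberProj
  refine ⟨⟨?_, ?_⟩, ?_, ?_⟩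
  · exact le_max_of_le_right (le_min (by linarith) ht₁)
  · exact max_le (by linarith) ((min_le_right _ _).trans ht₂)
  · linarith [max_le (show q - B₂ ≤ q - A₂ by linarith) (min_le_left (q - A₂) t)]
  · linarith [le_max_left (q - B₂) (min (q - A₂) t)]

theorem fiberProj_eq_self (hx : q - t ∈ Icc A₂ B₂) : fiberProj A₂ B₂ q t = t := by
  obtain ⟨hx₁, hx₂⟩ := hx
  unfold fiberProj
  rw [min_eq_right (by linarith), max_eq_right (by linarith)]

theorem valueSet_eq_image (h₂ : A₂ ≤ B₂) (hq : q ∈ Icc (A₁ + A₂) (B₁ + B₂)) :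
    valueSet V f A₁ B₁ A₂ B₂ q =
      (fun t => V (fiberProj A₂ B₂ q t) + f (q - fiberProj A₂ B₂ q t)) '' Icc A₁ B₁ := by
  ext z
  constructor
  · rintro ⟨x, hx, y, hy, rfl, rfl⟩
    have hproj : fiberProj A₂ B₂ (x + y) x = x := fiberProj_eq_self (by simpa using hy)
    exact ⟨x, hx, by simp only [hproj, add_sub_cancel_left]⟩
  · rintro ⟨t, ht, rfl⟩
    obtain ⟨hx, hy⟩ := fiberProj_mem h₂ hq ht
    exact ⟨_, hx, _, hy, add_sub_cancel _ _, rfl⟩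

theorem valueSet_congr {V' f' : ℝ → ℝ} (hV : EqOn V V' (Icc A₁ B₁)) (hf : EqOn f f' (Icc A₂ B₂)) :
    valueSet V f A₁ B₁ A₂ B₂ q = valueSet V' f' A₁ B₁ A₂ B₂ q := by
  ext z
  constructor
  · rintro ⟨x, hx, y, hy, hxy, rfl⟩
    exact ⟨x, hx, y, hy, hxy, by rw [hV hx, hf hy]⟩
  · rintro ⟨x, hx, y, hy, hxy, rfl⟩
    exact ⟨x, hx, y, hy, hxy, by rw [hV hx, hf hy]⟩

theorem continuousOn_sInf_valueSet_of_continuous (h₂ : A₂ ≤ B₂) (hV : Continuous V)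
    (hf : Continuous f) :
    ContinuousOn (fun q => sInf (valueSet V f A₁ B₁ A₂ B₂ q)) (Icc (A₁ + A₂) (B₁ + B₂)) := by
  have hcont : Continuous fun p : ℝ × ℝ =>
      V (fiberProj A₂ B₂ p.1 p.2) + f (p.1 - fiberProj A₂ B₂ p.1 p.2) :=
    (hV.comp continuous_fiberProj).add (hf.comp (continuous_fst.sub continuous_fiberProj))
  have hsInf := (isCompact_Icc (a := A₁) (b := B₁)).continuous_sInf
    (f := fun q t => V (fiberProj A₂ B₂ q t) + f (q - fiberProj A₂ B₂ q t)) hcont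
  exact hsInf.continuousOn.congr fun q hq => by simp only [valueSet_eq_image h₂ hq]

theorem continuousOn_sInf_valueSet (h₁ : A₁ ≤ B₁) (h₂ : A₂ ≤ B₂)
    (hV : ContinuousOn V (Icc A₁ B₁)) (hf : ContinuousOn f (Icc A₂ B₂)) :
    ContinuousOn (fun q => sInf (valueSet V f A₁ B₁ A₂ B₂ q)) (Icc (A₁ + A₂) (B₁ + B₂)) := by
  obtain ⟨V', hV', hVV'⟩ := hV.exists_continuous_eqOn_Icc h₁
  obtain ⟨f', hf', hff'⟩ := hf.exists_continuous_eqOn_Icc h₂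
  simp only [valueSet_congr hVV' hff']
  exact continuousOn_sInf_valueSet_of_continuous h₂ hV' hf'

theorem sInf_mem_valueSet (h₁ : A₁ ≤ B₁) (h₂ : A₂ ≤ B₂)
    (hV : ContinuousOn V (Icc A₁ B₁)) (hf : ContinuousOn f (Icc A₂ B₂))
    (hq : q ∈ Icc (A₁ + A₂) (B₁ + B₂)) :
    sInf (valueSet V f A₁ B₁ A₂ B₂ q) ∈ valueSet V f A₁ B₁ A₂ B₂ q := by
  have hproj : ContinuousOn (fiberProj A₂ B₂ q) (Icc A₁ B₁) :=
    (continuous_fiberProj.comp (Continuous.prodMk_right q)).continuousOn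
  have hcont : ContinuousOn (fun t => V (fiberProj A₂ B₂ q t) + f (q - fiberProj A₂ B₂ q t))
      (Icc A₁ B₁) :=
    (hV.comp hproj fun _ ht => (fiberProj_mem h₂ hq ht).1).add
      (hf.comp (continuousOn_const.sub hproj) fun _ ht => (fiberProj_mem h₂ hq ht).2)
  rw [valueSet_eq_image h₂ hq]
  exact (isCompact_Icc.image_of_continuousOn hcont).sInf_mem ((nonempty_Icc.2 h₁).image _)

end Superposition

open Superposition in
/-- If `V` is continuous on the compact interval `[A₁, B₁]` and `f` is continuous on
`[A₂, B₂]` (both nonempty), then the superposition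
`q ↦ inf { V x + f y : x ∈ [A₁,B₁], y ∈ [A₂,B₂], x + y = q }` is continuous on
`[A₁ + A₂, B₁ + B₂]`, and the infimum is attained for every `q` in this interval. -/
theorem stmt_3 (A₁ B₁ A₂ B₂ : ℝ) (h₁ : A₁ ≤ B₁) (h₂ : A₂ ≤ B₂) (V f : ℝ → ℝ)
    (hV : ContinuousOn V (Set.Icc A₁ B₁)) (hf : ContinuousOn f (Set.Icc A₂ B₂)) :
    ContinuousOn
      (fun q => sInf {z | ∃ x ∈ Set.Icc A₁ B₁, ∃ y ∈ Set.Icc A₂ B₂,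
        x + y = q ∧ z = V x + f y})
      (Set.Icc (A₁ + A₂) (B₁ + B₂)) ∧
    ∀ q ∈ Set.Icc (A₁ + A₂) (B₁ + B₂), ∃ x ∈ Set.Icc A₁ B₁, ∃ y ∈ Set.Icc A₂ B₂,
      x + y = q ∧
      V x + f y = sInf {z | ∃ x' ∈ Set.Icc A₁ B₁, ∃ y' ∈ Set.Icc A₂ B₂,
        x' + y' = q ∧ z = V x' + f y'} := by
  refine ⟨continuousOn_sInf_valueSet h₁ h₂ hV hf, fun q hq => ?_⟩
  obtain ⟨x, hx, y, hy, hxy, hmin⟩ := sInf_mem_valueSet h₁ h₂ hV hf hq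
  exact ⟨x, hx, y, hy, hxy, hmin.symm⟩
end

section
/- Let V : ℝ → ℝ be continuous and piecewise affine on the compact interval [A₁, B₁] and f : ℝ → ℝ be continuous and piecewise affine on the compact interval [A₂, B₂]. Then the superposition (V ⊞ f), defined on [A₁ + A₂, B₁ + B₂] by (V ⊞ f)(q) = min { V(x) + f(y) : x ∈ [A₁, B₁], y ∈ [A₂, B₂], x + y = q }, is piecewise affine on [A₁ + A₂, B₁ + B₂]. -/
/-!
Let `F₁`, `F₂` be the break points of `V` and `f`, together with the ends of their intervals.
On the line `x + y = q`, the function `x ↦ V x + f (q - x)` is piecewise affine, so its minimum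
is attained at a point with `x ∈ F₁` or `y ∈ F₂`. On an interval whose interior misses
`F₁ + F₂`, such a candidate (`x = t` or `y = s`) stays feasible throughout, or can be traded for
one that does, and its value depends affinely on `q`. So there `V ⊞ f` is the minimum of finitely
many affine functions, which is piecewise affine, and gluing over the gaps of `F₁ + F₂` gives
the claim.
-/

/-- `h` is piecewise affine on `[A, B]`: there is a finite subdivision
`A = t₀ < t₁ < ⋯ < t_m = B` such that `h` is affine on each subinterval. -/
def PiecewiseAffineOn (h : ℝ → ℝ) (A B : ℝ) : Prop :=
  ∃ m : ℕ, ∃ t : Fin (m + 1) → ℝ, StrictMono t ∧ t 0 = A ∧ t (Fin.last m) = B ∧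
    ∀ i : Fin m, ∃ k d : ℝ, ∀ q ∈ Set.Icc (t i.castSucc) (t i.succ), h q = k * q + d

open Set

def AffineOn (h : ℝ → ℝ) (s : Set ℝ) : Prop :=
  ∃ k d : ℝ, ∀ q ∈ s, h q = k * q + d

/-- Unlike a subdivision, a break set may be enlarged freely and need not lie in `[A, B]`. -/
def IsBreakSet (h : ℝ → ℝ) (A B : ℝ) (F : Finset ℝ) : Prop :=
  ∀ u v, A ≤ u → v ≤ B → (∀ c ∈ F, c ∉ Ioo u v) → AffineOn h (Icc u v)

section AffineOn

variable {g h : ℝ → ℝ} {s t : Set ℝ}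

theorem affineOn_of_subsingleton (hs : s.Subsingleton) : AffineOn h s := by
  rcases s.eq_empty_or_nonempty with rfl | ⟨x, hx⟩
  · exact ⟨0, 0, by simp⟩
  · exact ⟨0, h x, fun q hq => by rw [hs hq hx]; ring⟩

theorem AffineOn.mono (hh : AffineOn h t) (hst : s ⊆ t) : AffineOn h s :=
  let ⟨k, d, hkd⟩ := hh
  ⟨k, d, fun q hq => hkd q (hst hq)⟩

theorem AffineOn.congr (hh : AffineOn h s) (hgh : EqOn g h s) : AffineOn g s :=
  let ⟨k, d, hkd⟩ := hh
  ⟨k, d, fun q hq => (hgh hq).trans (hkd q hq)⟩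

theorem AffineOn.min_le {a b x : ℝ} (hh : AffineOn h (Icc a b)) (hx : x ∈ Icc a b) :
    min (h a) (h b) ≤ h x := by
  obtain ⟨k, d, hkd⟩ := hh
  have hab : a ≤ b := hx.1.trans hx.2
  rw [hkd a ⟨le_rfl, hab⟩, hkd b ⟨hab, le_rfl⟩, hkd x hx]
  rcases le_total 0 k with hk | hk
  · exact min_le_of_left_le (by nlinarith [hx.1])
  · exact min_le_of_right_le (by nlinarith [hx.2])

theorem AffineOn.isBreakSet {A B : ℝ} (hh : AffineOn h (Icc A B)) : IsBreakSet h A B ∅ :=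
  fun _ _ hu hv _ => hh.mono (Icc_subset_Icc hu hv)

end AffineOn

theorem exists_enclosing_gap {F : Finset ℝ} {x y : ℝ} (hx : ∃ c ∈ F, c ≤ x)
    (hy : ∃ c ∈ F, y ≤ c) (hF : ∀ c ∈ F, c ∉ Ioo x y) :
    ∃ a ∈ F, ∃ b ∈ F, a ≤ x ∧ y ≤ b ∧ (∀ c ∈ F, c ≤ x → c ≤ a) ∧ (∀ c ∈ F, y ≤ c → b ≤ c) ∧
      ∀ c ∈ F, c ∉ Ioo a b := by
  classical
  have hxne : (F.filter (· ≤ x)).Nonempty := by simpa [Finset.Nonempty] using hx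
  have hyne : (F.filter (y ≤ ·)).Nonempty := by simpa [Finset.Nonempty] using hy
  obtain ⟨ha, ha_max⟩ := Finset.isGreatest_max' _ hxne
  obtain ⟨hb, hb_min⟩ := Finset.isLeast_min' _ hyne
  simp only [Finset.coe_filter] at ha hb
  have ha_max' : ∀ c ∈ F, c ≤ x → c ≤ _ := fun c hc hcx => ha_max (by simp [hc, hcx])
  have hb_min' : ∀ c ∈ F, y ≤ c → _ ≤ c := fun c hc hyc => hb_min (by simp [hc, hyc])
  refine ⟨_, ha.1, _, hb.1, ha.2, hb.2, ha_max', hb_min', fun c hc hcab => hF c hc ⟨?_, ?_⟩⟩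
  · exact lt_of_not_ge fun hcx => (ha_max' c hc hcx).not_gt hcab.1
  · exact lt_of_not_ge fun hyc => (hb_min' c hc hyc).not_gt hcab.2

namespace IsBreakSet

variable {g h : ℝ → ℝ} {A B : ℝ} {F G : Finset ℝ}

theorem mono (hh : IsBreakSet h A B F) (hFG : F ⊆ G) : IsBreakSet h A B G :=
  fun u v hu hv hG => hh u v hu hv fun c hc => hG c (hFG hc)

theorem restrict (hh : IsBreakSet h A B F) {A' B' : ℝ} (hA : A ≤ A') (hB : B' ≤ B) :
    IsBreakSet h A' B' F :=
  fun u v hu hv => hh u v (hA.trans hu) (hv.trans hB)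

theorem congr (hh : IsBreakSet h A B F) (hgh : EqOn g h (Icc A B)) : IsBreakSet g A B F :=
  fun u v hu hv hF => (hh u v hu hv hF).congr (hgh.mono (Icc_subset_Icc hu hv))

theorem add (hg : IsBreakSet g A B F) (hh : IsBreakSet h A B G) :
    IsBreakSet (fun q => g q + h q) A B (F ∪ G) := by
  intro u v hu hv hFG
  obtain ⟨k₁, d₁, h₁⟩ := hg u v hu hv fun c hc => hFG c (Finset.mem_union_left _ hc)
  obtain ⟨k₂, d₂, h₂⟩ := hh u v hu hv fun c hc => hFG c (Finset.mem_union_right _ hc)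
  exact ⟨k₁ + k₂, d₁ + d₂, fun q hq => by dsimp only; rw [h₁ q hq, h₂ q hq]; ring⟩

theorem comp_sub (hh : IsBreakSet h A B F) (q : ℝ) :
    IsBreakSet (fun x => h (q - x)) (q - B) (q - A) (F.image (q - ·)) := by
  intro u v hu hv hF
  obtain ⟨k, d, hkd⟩ := hh (q - v) (q - u) (by linarith) (by linarith) fun c hc hcuv =>
    hF (q - c) (Finset.mem_image_of_mem _ hc) ⟨by linarith [hcuv.2], by linarith [hcuv.1]⟩
  exact ⟨-k, k * q + d, fun x hx => by
    dsimp only; rw [hkd (q - x) ⟨by linarith [hx.2], by linarith [hx.1]⟩]; ring⟩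

theorem exists_mem_le (hh : IsBreakSet h A B F) (hA : A ∈ F) (hB : B ∈ F) {x : ℝ}
    (hx : x ∈ Icc A B) : ∃ c ∈ F, c ∈ Icc A B ∧ h c ≤ h x := by
  obtain ⟨a, ha, b, hb, hax, hxb, ha_max, hb_min, hgap⟩ :=
    exists_enclosing_gap ⟨A, hA, hx.1⟩ ⟨B, hB, hx.2⟩ (by simp)
  have hAa := ha_max A hA hx.1
  have hbB := hb_min B hB hx.2
  have hmin := (hh a b hAa hbB hgap).min_le ⟨hax, hxb⟩
  rcases min_choice (h a) (h b) with hm | hm <;> rw [hm] at hmin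
  · exact ⟨a, ha, ⟨hAa, hax.trans hx.2⟩, hmin⟩
  · exact ⟨b, hb, ⟨hx.1.trans hxb, hbB⟩, hmin⟩

end IsBreakSet

theorem exists_isBreakSet_of_gaps {h : ℝ → ℝ} {A B : ℝ} (F : Finset ℝ)
    (hloc : ∀ u v, A ≤ u → u < v → v ≤ B → (∀ c ∈ F, c ∉ Ioo u v) →
      ∃ G, IsBreakSet h u v G) :
    ∃ G, IsBreakSet h A B G := by
  classical
  choose! G hG using hloc
  set F' := insert A (insert B F)
  refine ⟨F' ∪ (F' ×ˢ F').biUnion (fun p => G p.1 p.2), fun u v hu hv hgap => ?_⟩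
  rcases le_or_gt v u with hvu | huv
  · exact affineOn_of_subsingleton (subsingleton_Icc_of_ge hvu)
  obtain ⟨a, ha, b, hb, hau, hvb, ha_max, hb_min, hab_gap⟩ :=
    exists_enclosing_gap (F := F') ⟨A, by simp [F'], hu⟩ ⟨B, by simp [F'], hv⟩
      fun c hc => hgap c (Finset.mem_union_left _ hc)
  refine hG a b (ha_max A (by simp [F']) hu) (hau.trans_lt (huv.trans_le hvb))
    (hb_min B (by simp [F']) hv) (fun c hc => hab_gap c (by simp [F', hc])) u v hau hvb
    fun c hc => hgap c (Finset.mem_union_right _ ?_)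
  exact Finset.mem_biUnion.2 ⟨(a, b), Finset.mem_product.2 ⟨ha, hb⟩, hc⟩

/-- The break point is where the two lines cross (junk `0` when they are parallel, in which
case no break point is needed). -/
theorem isBreakSet_min_affine (k₁ d₁ k₂ d₂ A B : ℝ) :
    IsBreakSet (fun q => min (k₁ * q + d₁) (k₂ * q + d₂)) A B {(d₂ - d₁) / (k₁ - k₂)} := by
  intro u v _ _ hc
  set c := (d₂ - d₁) / (k₁ - k₂)
  have hside : (∀ q ∈ Icc u v, c ≤ q) ∨ ∀ q ∈ Icc u v, q ≤ c := by
    by_contra! ⟨⟨q, hq, hqc⟩, ⟨q', hq', hcq'⟩⟩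
    exact hc c (Finset.mem_singleton_self c) ⟨hq.1.trans_lt hqc, hcq'.trans_le hq'.2⟩
  have hcmp : (∀ q ∈ Icc u v, k₁ * q + d₁ ≤ k₂ * q + d₂) ∨
      ∀ q ∈ Icc u v, k₂ * q + d₂ ≤ k₁ * q + d₁ := by
    rcases eq_or_ne k₁ k₂ with rfl | hk
    · rcases le_total d₁ d₂ with hd | hd
      · exact Or.inl fun q _ => by linarith
      · exact Or.inr fun q _ => by linarith
    have hdiff : ∀ q, k₁ * q + d₁ - (k₂ * q + d₂) = (k₁ - k₂) * (q - c) := fun q => by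
      simp only [c]; field_simp [sub_ne_zero.2 hk]; ring
    rcases hside with hs | hs <;> rcases le_total k₁ k₂ with hk' | hk'
    · exact Or.inl fun q hq => by nlinarith [hdiff q, hs q hq]
    · exact Or.inr fun q hq => by nlinarith [hdiff q, hs q hq]
    · exact Or.inr fun q hq => by nlinarith [hdiff q, hs q hq]
    · exact Or.inl fun q hq => by nlinarith [hdiff q, hs q hq]
  rcases hcmp with hle | hle
  · exact ⟨k₁, d₁, fun q hq => min_eq_left (hle q hq)⟩
  · exact ⟨k₂, d₂, fun q hq => min_eq_right (hle q hq)⟩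

theorem exists_isBreakSet_min {g h : ℝ → ℝ} {A B : ℝ} {F G : Finset ℝ}
    (hg : IsBreakSet g A B F) (hh : IsBreakSet h A B G) :
    ∃ H, IsBreakSet (fun q => min (g q) (h q)) A B H := by
  refine exists_isBreakSet_of_gaps (F ∪ G) fun u v hu _ hv hgap => ?_
  obtain ⟨k₁, d₁, h₁⟩ := hg u v hu hv fun c hc => hgap c (Finset.mem_union_left _ hc)
  obtain ⟨k₂, d₂, h₂⟩ := hh u v hu hv fun c hc => hgap c (Finset.mem_union_right _ hc)
  exact ⟨_, (isBreakSet_min_affine k₁ d₁ k₂ d₂ u v).congr fun q hq => by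
    simp only [h₁ q hq, h₂ q hq]⟩

theorem exists_isBreakSet_inf' {ι : Type*} {s : Finset ι} (hs : s.Nonempty) {g : ι → ℝ → ℝ}
    {A B : ℝ} (hg : ∀ i ∈ s, ∃ G, IsBreakSet (g i) A B G) :
    ∃ G, IsBreakSet (fun q => s.inf' hs (g · q)) A B G := by
  induction hs using Finset.Nonempty.cons_induction with
  | singleton i => simpa using hg i (Finset.mem_singleton_self i)
  | cons i s hi hs ih =>
    obtain ⟨G₁, hG₁⟩ := hg i (Finset.mem_cons_self i s)
    obtain ⟨G₂, hG₂⟩ := ih fun j hj => hg j (Finset.mem_cons_of_mem hj)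
    convert exists_isBreakSet_min hG₁ hG₂ using 4
    exact Finset.inf'_cons hs _

namespace PiecewiseAffineOn

variable {h : ℝ → ℝ} {A B : ℝ}

theorem exists_isBreakSet (hh : PiecewiseAffineOn h A B) :
    A ≤ B ∧ ∃ F, IsBreakSet h A B F := by
  classical
  obtain ⟨m, t, ht, h0, hlast, haff⟩ := hh
  refine ⟨h0 ▸ hlast ▸ ht.monotone (Fin.zero_le _), Finset.univ.image t,
    fun u v hu hv hgap => ?_⟩
  rcases le_or_gt v u with hvu | huv
  · exact affineOn_of_subsingleton (subsingleton_Icc_of_ge hvu)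
  obtain ⟨_, ha, _, hb, hau, hvb, -, -, hab_gap⟩ := exists_enclosing_gap
    ⟨A, Finset.mem_image.2 ⟨0, Finset.mem_univ _, h0⟩, hu⟩
    ⟨B, Finset.mem_image.2 ⟨Fin.last m, Finset.mem_univ _, hlast⟩, hv⟩ hgap
  obtain ⟨i, -, rfl⟩ := Finset.mem_image.1 ha
  obtain ⟨j, -, rfl⟩ := Finset.mem_image.1 hb
  have hij : i < j := ht.lt_iff_lt.1 (hau.trans_lt (huv.trans_le hvb))
  obtain ⟨i, rfl⟩ := Fin.exists_castSucc_eq.2 (Fin.ne_last_of_lt hij)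
  have hj : t j ≤ t i.succ := le_of_not_gt fun hlt =>
    hab_gap _ (Finset.mem_image_of_mem _ (Finset.mem_univ _)) ⟨ht Fin.castSucc_lt_succ, hlt⟩
  obtain ⟨k, d, hkd⟩ := haff i
  exact ⟨k, d, fun q hq => hkd q ⟨hau.trans hq.1, hq.2.trans (hvb.trans hj)⟩⟩

theorem of_isBreakSet {F : Finset ℝ} (hAB : A ≤ B) (hh : IsBreakSet h A B F) :
    PiecewiseAffineOn h A B := by
  classical
  set F' := insert A (insert B (F.filter (· ∈ Icc A B)))
  have hF' : ∀ c ∈ F', c ∈ Icc A B := by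
    simp only [F', Finset.mem_insert, Finset.mem_filter]
    rintro c (rfl | rfl | ⟨-, hc⟩)
    exacts [⟨le_rfl, hAB⟩, ⟨hAB, le_rfl⟩, hc]
  have hA : A ∈ F' := by simp [F']
  have hB : B ∈ F' := by simp [F']
  obtain ⟨m, hm⟩ := Nat.exists_eq_succ_of_ne_zero (Finset.card_ne_zero_of_mem hA)
  set t := F'.orderEmbOfFin hm
  have ht : ∀ i, t i ∈ F' := fun i => F'.orderEmbOfFin_mem hm i
  refine ⟨m, t, t.strictMono, ?_, ?_, fun i => hh _ _ (hF' _ (ht _)).1 (hF' _ (ht _)).2 ?_⟩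
  · rw [show (0 : Fin (m + 1)) = ⟨0, m.succ_pos⟩ from rfl, Finset.orderEmbOfFin_zero]
    exact le_antisymm (F'.min'_le A hA) (F'.le_min' _ A fun c hc => (hF' c hc).1)
  · rw [show Fin.last m = ⟨m + 1 - 1, by omega⟩ from rfl, Finset.orderEmbOfFin_last _ m.succ_pos]
    exact le_antisymm (F'.max'_le _ B fun c hc => (hF' c hc).2) (F'.le_max' B hB)
  · intro c hc hci
    have hcF' : c ∈ F' := by
      simp only [F', Finset.mem_insert, Finset.mem_filter]
      exact Or.inr (Or.inr ⟨hc, (hF' _ (ht _)).1.trans hci.1.le, hci.2.le.trans (hF' _ (ht _)).2⟩)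
    obtain ⟨j, rfl⟩ : c ∈ Set.range t := by rw [Finset.range_orderEmbOfFin]; exact hcF'
    have hij : i.castSucc < j := t.lt_iff_lt.1 hci.1
    exact (t.monotone (Fin.castSucc_lt_iff_succ_le.1 hij)).not_gt hci.2

end PiecewiseAffineOn

section InfConvolution

variable {V f : ℝ → ℝ} {A₁ B₁ A₂ B₂ : ℝ} {F₁ F₂ : Finset ℝ}

def convValues (V f : ℝ → ℝ) (A₁ B₁ A₂ B₂ q : ℝ) : Set ℝ :=
  {z | ∃ x ∈ Icc A₁ B₁, ∃ y ∈ Icc A₂ B₂, x + y = q ∧ z = V x + f y}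

theorem convValues_nonempty (h₁ : A₁ ≤ B₁) (h₂ : A₂ ≤ B₂) {q : ℝ}
    (hq : q ∈ Icc (A₁ + A₂) (B₁ + B₂)) : (convValues V f A₁ B₁ A₂ B₂ q).Nonempty := by
  rw [← Set.Icc_add_Icc h₁ h₂] at hq
  obtain ⟨x, hx, y, hy, hxy⟩ := hq
  exact ⟨_, x, hx, y, hy, hxy, rfl⟩

/-- On the line `x + y = q`, the function `x ↦ V x + f (q - x)` is piecewise affine with
break points in `F₁ ∪ (q - F₂)`, so it is minimised where `x ∈ F₁` or `y ∈ F₂`. -/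
theorem exists_breakPoint_le (hV : IsBreakSet V A₁ B₁ F₁) (hf : IsBreakSet f A₂ B₂ F₂)
    (hA₁ : A₁ ∈ F₁) (hB₁ : B₁ ∈ F₁) (hA₂ : A₂ ∈ F₂) (hB₂ : B₂ ∈ F₂) {x y : ℝ}
    (hx : x ∈ Icc A₁ B₁) (hy : y ∈ Icc A₂ B₂) :
    ∃ x' ∈ Icc A₁ B₁, x + y - x' ∈ Icc A₂ B₂ ∧ (x' ∈ F₁ ∨ x + y - x' ∈ F₂) ∧
      V x' + f (x + y - x') ≤ V x + f y := by
  classical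
  set q := x + y
  have hφ : IsBreakSet (fun x' => V x' + f (q - x')) (max A₁ (q - B₂)) (min B₁ (q - A₂))
      (F₁ ∪ F₂.image (q - ·)) :=
    (hV.restrict (le_max_left _ _) (min_le_left _ _)).add
      ((hf.comp_sub q).restrict (le_max_right _ _) (min_le_right _ _))
  have hlo : max A₁ (q - B₂) ∈ F₁ ∪ F₂.image (q - ·) := by
    rcases max_choice A₁ (q - B₂) with h | h <;> rw [h] <;> simp [hA₁, hB₂]
  have hhi : min B₁ (q - A₂) ∈ F₁ ∪ F₂.image (q - ·) := by
    rcases min_choice B₁ (q - A₂) with h | h <;> rw [h] <;> simp [hB₁, hA₂]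
  obtain ⟨c, hc, hc_mem, hle⟩ := hφ.exists_mem_le hlo hhi
    ⟨max_le hx.1 (by linarith [hy.2]), le_min hx.2 (by linarith [hy.1])⟩
  refine ⟨c, ⟨(le_max_left _ _).trans hc_mem.1, hc_mem.2.trans (min_le_left _ _)⟩,
    ⟨by linarith [hc_mem.2.trans (min_le_right _ _)],
      by linarith [(le_max_right A₁ (q - B₂)).trans hc_mem.1]⟩, ?_, ?_⟩
  · rcases Finset.mem_union.1 hc with hc | hc
    · exact Or.inl hc
    · obtain ⟨s, hs, rfl⟩ := Finset.mem_image.1 hc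
      exact Or.inr (by simpa using hs)
  · simpa [q] using hle

/-- The candidate minimisers on the line `x + y = q`, as functions of `q`: `inl t` is the
point with `x = t`, and `inr s` the point with `y = s`; `corner` returns its `x`. -/
def corner : ℝ ⊕ ℝ → ℝ → ℝ :=
  Sum.elim (fun t _ => t) (fun s q => q - s)

def cornerValue (V f : ℝ → ℝ) (i : ℝ ⊕ ℝ) (q : ℝ) : ℝ :=
  V (corner i q) + f (q - corner i q)

def CornerFeasibleOn (A₁ B₁ A₂ B₂ u v : ℝ) (i : ℝ ⊕ ℝ) : Prop :=
  ∀ q ∈ Icc u v, corner i q ∈ Icc A₁ B₁ ∧ q - corner i q ∈ Icc A₂ B₂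

variable {u v : ℝ}

theorem CornerFeasibleOn.affineOn (hV : IsBreakSet V A₁ B₁ F₁) (hf : IsBreakSet f A₂ B₂ F₂)
    (huv : u ≤ v) (hS : ∀ c ∈ Finset.image₂ (· + ·) F₁ F₂, c ∉ Ioo u v) {i : ℝ ⊕ ℝ}
    (hi : i ∈ F₁.disjSum F₂) (hfeas : CornerFeasibleOn A₁ B₁ A₂ B₂ u v i) :
    AffineOn (cornerValue V f i) (Icc u v) := by
  have hu := hfeas u ⟨le_rfl, huv⟩
  have hv := hfeas v ⟨huv, le_rfl⟩
  rcases i with t | s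
  · have ht : t ∈ F₁ := Finset.inl_mem_disjSum.1 hi
    simp only [corner, Sum.elim_inl] at hu hv
    obtain ⟨k, d, hkd⟩ := hf (u - t) (v - t) (by linarith [hu.2.1]) (by linarith [hv.2.2])
      fun s hs hst => hS (t + s) (Finset.mem_image₂_of_mem ht hs)
        ⟨by linarith [hst.1], by linarith [hst.2]⟩
    exact ⟨k, V t - k * t + d, fun q hq => by
      simp only [cornerValue, corner, Sum.elim_inl]
      rw [hkd (q - t) ⟨by linarith [hq.1], by linarith [hq.2]⟩]; ring⟩
  · have hs : s ∈ F₂ := Finset.inr_mem_disjSum.1 hi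
    simp only [corner, Sum.elim_inr] at hu hv
    obtain ⟨k, d, hkd⟩ := hV (u - s) (v - s) hu.1.1 hv.1.2
      fun t ht hts => hS (t + s) (Finset.mem_image₂_of_mem ht hs)
        ⟨by linarith [hts.1], by linarith [hts.2]⟩
    exact ⟨k, -k * s + d + f s, fun q hq => by
      simp only [cornerValue, corner, Sum.elim_inr, sub_sub_cancel]
      rw [hkd (q - s) ⟨by linarith [hq.1], by linarith [hq.2]⟩]; ring⟩

/-- A break-point candidate at a point `q` of a gap `[u, v]` of `F₁ + F₂` is feasible on the
whole gap, unless `q` is an end of the gap; then the same point is also a candidate of the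
other kind, anchored at an end of `[A₂, B₂]` or `[A₁, B₁]`, which is feasible on the gap. -/
theorem exists_cornerFeasibleOn_eq (hA₁ : A₁ ∈ F₁) (hB₁ : B₁ ∈ F₁) (hA₂ : A₂ ∈ F₂)
    (hB₂ : B₂ ∈ F₂) (hu : A₁ + A₂ ≤ u) (hv : v ≤ B₁ + B₂)
    (hS : ∀ c ∈ Finset.image₂ (· + ·) F₁ F₂, c ∉ Ioo u v) {q x : ℝ} (hq : q ∈ Icc u v)
    (hx : x ∈ Icc A₁ B₁) (hy : q - x ∈ Icc A₂ B₂) (hbreak : x ∈ F₁ ∨ q - x ∈ F₂) :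
    ∃ i ∈ F₁.disjSum F₂, CornerFeasibleOn A₁ B₁ A₂ B₂ u v i ∧
      cornerValue V f i q = V x + f (q - x) := by
  have hS' : ∀ a ∈ F₁, ∀ b ∈ F₂, a + b ≤ u ∨ v ≤ a + b := fun a ha b hb => by
    by_contra! h
    exact hS _ (Finset.mem_image₂_of_mem ha hb) h
  obtain ⟨hqu, hqv⟩ := hq
  obtain ⟨⟨hx₁, hx₂⟩, hy₁, hy₂⟩ := And.intro hx hy
  rcases hbreak with ht | hs
  · rcases hS' x ht B₂ hB₂ with h2 | h2
    · obtain rfl : x = q - B₂ := by linarith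
      refine ⟨.inr B₂, Finset.inr_mem_disjSum.2 hB₂, fun q' ⟨h₁, h₂⟩ => ?_, rfl⟩
      simp only [corner, Sum.elim_inr, sub_sub_cancel, mem_Icc] at hy₁ ⊢
      refine ⟨⟨?_, ?_⟩, ?_, ?_⟩ <;> linarith
    rcases hS' x ht A₂ hA₂ with h1 | h1
    · refine ⟨.inl x, Finset.inl_mem_disjSum.2 ht, fun q' ⟨h₁, h₂⟩ => ?_, rfl⟩
      simp only [corner, Sum.elim_inl, mem_Icc]
      refine ⟨⟨?_, ?_⟩, ?_, ?_⟩ <;> linarith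
    · obtain rfl : x = q - A₂ := by linarith
      refine ⟨.inr A₂, Finset.inr_mem_disjSum.2 hA₂, fun q' ⟨h₁, h₂⟩ => ?_, rfl⟩
      simp only [corner, Sum.elim_inr, sub_sub_cancel, mem_Icc] at hy₂ ⊢
      refine ⟨⟨?_, ?_⟩, ?_, ?_⟩ <;> linarith
  · rcases hS' B₁ hB₁ (q - x) hs with h2 | h2
    · obtain rfl : x = B₁ := by linarith
      refine ⟨.inl x, Finset.inl_mem_disjSum.2 hB₁, fun q' ⟨h₁, h₂⟩ => ?_, rfl⟩
      simp only [corner, Sum.elim_inl, mem_Icc]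
      refine ⟨⟨?_, ?_⟩, ?_, ?_⟩ <;> linarith
    rcases hS' A₁ hA₁ (q - x) hs with h1 | h1
    · obtain ⟨s, rfl⟩ : ∃ s, x = q - s := ⟨q - x, by ring⟩
      simp only [sub_sub_cancel] at hs hy₁ hy₂
      refine ⟨.inr s, Finset.inr_mem_disjSum.2 hs, fun q' ⟨h₁, h₂⟩ => ?_, rfl⟩
      simp only [corner, Sum.elim_inr, sub_sub_cancel, mem_Icc]
      refine ⟨⟨?_, ?_⟩, ?_, ?_⟩ <;> linarith
    · obtain rfl : x = A₁ := by linarith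
      refine ⟨.inl x, Finset.inl_mem_disjSum.2 hA₁, fun q' ⟨h₁, h₂⟩ => ?_, rfl⟩
      simp only [corner, Sum.elim_inl, mem_Icc]
      refine ⟨⟨?_, ?_⟩, ?_, ?_⟩ <;> linarith

theorem exists_isBreakSet_sInf_convValues_of_gap (hV : IsBreakSet V A₁ B₁ F₁)
    (hf : IsBreakSet f A₂ B₂ F₂) (hA₁ : A₁ ∈ F₁) (hB₁ : B₁ ∈ F₁) (hA₂ : A₂ ∈ F₂)
    (hB₂ : B₂ ∈ F₂) (h₁ : A₁ ≤ B₁) (h₂ : A₂ ≤ B₂) (hu : A₁ + A₂ ≤ u) (huv : u < v)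
    (hv : v ≤ B₁ + B₂) (hS : ∀ c ∈ Finset.image₂ (· + ·) F₁ F₂, c ∉ Ioo u v) :
    ∃ G, IsBreakSet (fun q => sInf (convValues V f A₁ B₁ A₂ B₂ q)) u v G := by
  classical
  set I := (F₁.disjSum F₂).filter (CornerFeasibleOn A₁ B₁ A₂ B₂ u v)
  have hlower : ∀ q ∈ Icc u v, ∀ z ∈ convValues V f A₁ B₁ A₂ B₂ q,
      ∃ i ∈ I, cornerValue V f i q ≤ z := by
    rintro q hq _ ⟨x, hx, y, hy, rfl, rfl⟩
    obtain ⟨x', hx', hy', hbreak, hle⟩ := exists_breakPoint_le hV hf hA₁ hB₁ hA₂ hB₂ hx hy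
    obtain ⟨i, hi, hfeas, heq⟩ :=
      exists_cornerFeasibleOn_eq hA₁ hB₁ hA₂ hB₂ hu hv hS hq hx' hy' hbreak
    exact ⟨i, Finset.mem_filter.2 ⟨hi, hfeas⟩, heq ▸ hle⟩
  have hI : I.Nonempty := by
    obtain ⟨z, hz⟩ := convValues_nonempty h₁ h₂ ⟨hu, huv.le.trans hv⟩
    obtain ⟨i, hi, -⟩ := hlower u ⟨le_rfl, huv.le⟩ z hz
    exact ⟨i, hi⟩
  have hleast : ∀ q ∈ Icc u v,
      IsLeast (convValues V f A₁ B₁ A₂ B₂ q) (I.inf' hI (cornerValue V f · q)) := by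
    intro q hq
    refine ⟨?_, fun z hz => ?_⟩
    · obtain ⟨i, hi, heq⟩ := Finset.exists_mem_eq_inf' hI (cornerValue V f · q)
      obtain ⟨hx, hy⟩ := (Finset.mem_filter.1 hi).2 q hq
      exact ⟨_, hx, _, hy, add_sub_cancel _ _, heq⟩
    · obtain ⟨i, hi, hle⟩ := hlower q hq z hz
      exact (Finset.inf'_le _ hi).trans hle
  obtain ⟨G, hG⟩ := exists_isBreakSet_inf' hI fun i hi =>
    ⟨∅, (CornerFeasibleOn.affineOn hV hf huv.le hS (Finset.mem_filter.1 hi).1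
      (Finset.mem_filter.1 hi).2).isBreakSet⟩
  exact ⟨G, hG.congr fun q hq => (hleast q hq).csInf_eq⟩

theorem exists_isBreakSet_sInf_convValues (hV : IsBreakSet V A₁ B₁ F₁)
    (hf : IsBreakSet f A₂ B₂ F₂) (h₁ : A₁ ≤ B₁) (h₂ : A₂ ≤ B₂) :
    ∃ G, IsBreakSet (fun q => sInf (convValues V f A₁ B₁ A₂ B₂ q)) (A₁ + A₂) (B₁ + B₂) G := by
  classical
  set F₁' := insert A₁ (insert B₁ F₁)
  set F₂' := insert A₂ (insert B₂ F₂)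
  have hF₁ : F₁ ⊆ F₁' := (Finset.subset_insert _ _).trans (Finset.subset_insert _ _)
  have hF₂ : F₂ ⊆ F₂' := (Finset.subset_insert _ _).trans (Finset.subset_insert _ _)
  exact exists_isBreakSet_of_gaps (Finset.image₂ (· + ·) F₁' F₂') fun u v hu huv hv hS =>
    exists_isBreakSet_sInf_convValues_of_gap (hV.mono hF₁) (hf.mono hF₂) (by simp [F₁'])
      (by simp [F₁']) (by simp [F₂']) (by simp [F₂']) h₁ h₂ hu huv hv hS

end InfConvolution

theorem stmt_4_general (A₁ B₁ A₂ B₂ : ℝ) (V f : ℝ → ℝ)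
    (hVp : PiecewiseAffineOn V A₁ B₁)
    (hfp : PiecewiseAffineOn f A₂ B₂) :
    PiecewiseAffineOn
      (fun q => sInf {z | ∃ x ∈ Set.Icc A₁ B₁, ∃ y ∈ Set.Icc A₂ B₂,
        x + y = q ∧ z = V x + f y})
      (A₁ + A₂) (B₁ + B₂) := by
  obtain ⟨h₁, F₁, hF₁⟩ := hVp.exists_isBreakSet
  obtain ⟨h₂, F₂, hF₂⟩ := hfp.exists_isBreakSet
  obtain ⟨G, hG⟩ := exists_isBreakSet_sInf_convValues hF₁ hF₂ h₁ h₂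
  exact PiecewiseAffineOn.of_isBreakSet (add_le_add h₁ h₂) hG

/-- If `V` is continuous and piecewise affine on `[A₁, B₁]` and `f` is continuous
and piecewise affine on `[A₂, B₂]`, then their superposition
`q ↦ min { V x + f y : x ∈ [A₁,B₁], y ∈ [A₂,B₂], x + y = q }` is piecewise affine
on `[A₁ + A₂, B₁ + B₂]`. -/
theorem stmt_4 (A₁ B₁ A₂ B₂ : ℝ) (V f : ℝ → ℝ)
    (hVc : ContinuousOn V (Set.Icc A₁ B₁)) (hVp : PiecewiseAffineOn V A₁ B₁)
    (hfc : ContinuousOn f (Set.Icc A₂ B₂)) (hfp : PiecewiseAffineOn f A₂ B₂) :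
    PiecewiseAffineOn
      (fun q => sInf {z | ∃ x ∈ Set.Icc A₁ B₁, ∃ y ∈ Set.Icc A₂ B₂,
        x + y = q ∧ z = V x + f y})
      (A₁ + A₂) (B₁ + B₂) :=
  stmt_4_general A₁ B₁ A₂ B₂ V f hVp hfp
end

section
/- Let V be given as V(q) = min over a finite nonempty family of pairs (affine function k_l·q + d_l, closed interval [p_l, r_l] with p_l, r_l ∈ ℤ) of { k_l·q + d_l : q ∈ [p_l, r_l] }, defined on D_V = ⋃_l [p_l, r_l], and let f be given analogously by a finite nonempty family of affine pieces on closed intervals with integer endpoints, defined on D_f. Then for every integer q such that { (x, y) : x ∈ D_V, y ∈ D_f, x + y = q } is nonempty, the minimum of V(x) + f(y) over this set is attained at some pair (x, y) with x ∈ ℤ and y = q − x ∈ ℤ. -/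
/-!
For a piece `l` of `V` and a piece `m` of `f`, the points `x` with `x ∈ [p_l, r_l]` and
`q - x ∈ [p'_m, r'_m]` form the interval `[max p_l (q - r'_m), min r_l (q - p'_m)]`, whose
endpoints are integers. On the feasible set, `x ↦ V x + f (q - x)` is the pointwise minimum of
the affine functions attached to the pairs `(l, m)` whose interval contains `x`, and an affine
(more generally, concave) function on an interval is minimal at an endpoint. So the minimum is
attained among the finitely many integer endpoints of these intervals.
-/

open Set

theorem concaveOn_mul_add (c e : ℝ) {s : Set ℝ} (hs : Convex ℝ s) :
    ConcaveOn ℝ s fun x => c * x + e :=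
  ((LinearMap.mulLeft ℝ c).concaveOn hs).add_const e

theorem mem_Icc_and_sub_mem_Icc_iff {α : Type*} [AddCommGroup α] [LinearOrder α]
    [IsOrderedAddMonoid α] {a b a' b' c x : α} :
    x ∈ Icc a b ∧ c - x ∈ Icc a' b' ↔ x ∈ Icc (max a (c - b')) (min b (c - a')) := by
  simp only [mem_Icc, max_le_iff, le_min_iff, sub_le_comm (a := c), le_sub_comm (b := c)]
  tauto

theorem mem_iUnion_Icc_and_sub_mem_iUnion_Icc_iff {α ι κ : Type*} [AddCommGroup α] [LinearOrder α]
    [IsOrderedAddMonoid α] {a b : ι → α} {a' b' : κ → α} {c x : α} :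
    x ∈ ⋃ i, Icc (a i) (b i) ∧ c - x ∈ ⋃ j, Icc (a' j) (b' j) ↔
      x ∈ ⋃ ij : ι × κ, Icc (max (a ij.1) (c - b' ij.2)) (min (b ij.1) (c - a' ij.2)) := by
  simp only [mem_iUnion, Prod.exists, ← mem_Icc_and_sub_mem_Icc_iff, exists_and_left,
    exists_and_right]

theorem exists_int_isMinOn_of_isLeast_concaveOn {J : Type*} [Finite J] (a b : J → ℤ)
    (g : J → ℝ → ℝ) (hg : ∀ j, ConcaveOn ℝ (Icc (a j : ℝ) (b j)) (g j)) (F : ℝ → ℝ)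
    (hF : ∀ x ∈ ⋃ j, Icc (a j : ℝ) (b j),
      IsLeast {z | ∃ j, x ∈ Icc (a j : ℝ) (b j) ∧ z = g j x} (F x))
    (hne : (⋃ j, Icc (a j : ℝ) (b j)).Nonempty) :
    ∃ n : ℤ, (n : ℝ) ∈ ⋃ j, Icc (a j : ℝ) (b j) ∧ IsMinOn F (⋃ j, Icc (a j : ℝ) (b j)) n := by
  set S := ⋃ j, Icc (a j : ℝ) (b j)
  set T : Set ℤ := {n | (n : ℝ) ∈ S ∧ ∃ j, n = a j ∨ n = b j}
  have hT : T.Finite := ((finite_range a).union (finite_range b)).subset <| by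
    rintro n ⟨-, j, rfl | rfl⟩
    exacts [Or.inl ⟨j, rfl⟩, Or.inr ⟨j, rfl⟩]
  obtain ⟨x₀, hx₀⟩ := hne
  obtain ⟨j₀, hj₀⟩ := mem_iUnion.1 hx₀
  have hTne : T.Nonempty :=
    ⟨a j₀, mem_iUnion.2 ⟨j₀, left_mem_Icc.2 (hj₀.1.trans hj₀.2)⟩, j₀, Or.inl rfl⟩
  obtain ⟨n, ⟨hnS, -⟩, hn⟩ := T.exists_min_image (fun n => F n) hT hTne
  refine ⟨n, hnS, isMinOn_iff.2 fun x hx => ?_⟩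
  obtain ⟨⟨j, hxj, hFx⟩, -⟩ := hF x hx
  have hab : (a j : ℝ) ≤ b j := hxj.1.trans hxj.2
  have hendpoint : ∀ m : ℤ, (m : ℝ) ∈ Icc (a j : ℝ) (b j) → (m = a j ∨ m = b j) →
      F n ≤ g j m := fun m hm hend =>
    (hn m ⟨mem_iUnion.2 ⟨j, hm⟩, j, hend⟩).trans ((hF m (mem_iUnion.2 ⟨j, hm⟩)).2 ⟨j, hm, rfl⟩)
  calc F n ≤ min (g j (a j)) (g j (b j)) :=
        le_min (hendpoint _ (left_mem_Icc.2 hab) (Or.inl rfl))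
          (hendpoint _ (right_mem_Icc.2 hab) (Or.inr rfl))
    _ ≤ g j x := (hg j).min_le_of_mem_Icc (left_mem_Icc.2 hab) (right_mem_Icc.2 hab) hxj
    _ = F x := hFx.symm

theorem isLeast_setOf_exists_prod_add {ι κ : Type*} {P : ι → Prop} {Q : κ → Prop} {u : ι → ℝ}
    {v : κ → ℝ} {a b : ℝ} (ha : IsLeast {z | ∃ i, P i ∧ z = u i} a)
    (hb : IsLeast {z | ∃ j, Q j ∧ z = v j} b) :
    IsLeast {z | ∃ ij : ι × κ, (P ij.1 ∧ Q ij.2) ∧ z = u ij.1 + v ij.2} (a + b) := by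
  have hset : {z | ∃ ij : ι × κ, (P ij.1 ∧ Q ij.2) ∧ z = u ij.1 + v ij.2} =
      image2 (· + ·) {z | ∃ i, P i ∧ z = u i} {z | ∃ j, Q j ∧ z = v j} := by
    ext z
    constructor
    · rintro ⟨⟨i, j⟩, ⟨hi, hj⟩, rfl⟩
      exact ⟨_, ⟨i, hi, rfl⟩, _, ⟨j, hj, rfl⟩, rfl⟩
    · rintro ⟨_, ⟨i, hi, rfl⟩, _, ⟨j, hj, rfl⟩, rfl⟩
      exact ⟨(i, j), ⟨hi, hj⟩, rfl⟩
  rw [hset]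
  exact ha.image2 (fun _ _ _ h => add_le_add h le_rfl) (fun _ _ _ h => add_le_add le_rfl h) hb

theorem stmt_8_general {ι κ : Type*} [Fintype ι] [Fintype κ]
    (k d : ι → ℝ) (p r : ι → ℤ)
    (k' d' : κ → ℝ) (p' r' : κ → ℤ)
    (DV Df : Set ℝ)
    (hDV : DV = ⋃ l, Set.Icc ((p l : ℝ)) ((r l : ℝ)))
    (hDf : Df = ⋃ l, Set.Icc ((p' l : ℝ)) ((r' l : ℝ)))
    (V f : ℝ → ℝ)
    (hV : ∀ x ∈ DV,
      IsLeast {z | ∃ l, x ∈ Set.Icc ((p l : ℝ)) ((r l : ℝ)) ∧ z = k l * x + d l} (V x))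
    (hf : ∀ y ∈ Df,
      IsLeast {z | ∃ l, y ∈ Set.Icc ((p' l : ℝ)) ((r' l : ℝ)) ∧ z = k' l * y + d' l} (f y))
    (q : ℤ) (hfeas : ∃ x ∈ DV, ∃ y ∈ Df, x + y = (q : ℝ)) :
    ∃ x ∈ DV, ∃ y ∈ Df, x + y = (q : ℝ) ∧
      (∃ m : ℤ, (m : ℝ) = x) ∧ (∃ m : ℤ, (m : ℝ) = y) ∧
      ∀ x' ∈ DV, ∀ y' ∈ Df, x' + y' = (q : ℝ) → V x + f y ≤ V x' + f y' := by
  set A : ι × κ → ℤ := fun lm => max (p lm.1) (q - r' lm.2)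
  set B : ι × κ → ℤ := fun lm => min (r lm.1) (q - p' lm.2)
  have hpiece : ∀ (lm : ι × κ) (x : ℝ), x ∈ Icc (A lm : ℝ) (B lm) ↔
      x ∈ Icc (p lm.1 : ℝ) (r lm.1) ∧ (q : ℝ) - x ∈ Icc (p' lm.2 : ℝ) (r' lm.2) := by
    intro lm x
    simp only [A, B]
    push_cast
    exact mem_Icc_and_sub_mem_Icc_iff.symm
  have hfeasible : ∀ x : ℝ, x ∈ DV ∧ (q : ℝ) - x ∈ Df ↔ x ∈ ⋃ lm, Icc (A lm : ℝ) (B lm) := by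
    intro x
    subst hDV hDf
    simp only [A, B]
    push_cast
    exact mem_iUnion_Icc_and_sub_mem_iUnion_Icc_iff
  have hne : (⋃ lm, Icc (A lm : ℝ) (B lm)).Nonempty := by
    obtain ⟨x, hx, y, hy, hxy⟩ := hfeas
    exact ⟨x, (hfeasible x).1 ⟨hx, by rw [← hxy, add_sub_cancel_left]; exact hy⟩⟩
  have hleast : ∀ x ∈ ⋃ lm, Icc (A lm : ℝ) (B lm), IsLeast {z | ∃ lm, x ∈ Icc (A lm : ℝ) (B lm) ∧
      z = k lm.1 * x + d lm.1 + (k' lm.2 * (q - x) + d' lm.2)} (V x + f (q - x)) := by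
    intro x hx
    obtain ⟨hxV, hxf⟩ := (hfeasible x).2 hx
    simpa only [hpiece] using isLeast_setOf_exists_prod_add (hV x hxV) (hf _ hxf)
  obtain ⟨n, hn, hmin⟩ := exists_int_isMinOn_of_isLeast_concaveOn A B _
    (fun lm => (concaveOn_mul_add (k lm.1 - k' lm.2) (d lm.1 + k' lm.2 * q + d' lm.2)
      (convex_Icc _ _)).congr fun x _ => by ring) _ hleast hne
  obtain ⟨hnV, hnf⟩ := (hfeasible n).2 hn
  refine ⟨n, hnV, q - n, hnf, add_sub_cancel _ _, ⟨n, rfl⟩, ⟨q - n, by push_cast; rfl⟩,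
    fun x' hx' y' hy' hxy => ?_⟩
  obtain rfl : y' = q - x' := by linarith
  exact isMinOn_iff.1 hmin x' ((hfeasible x').1 ⟨hx', hy'⟩)

/-- Let `V` and `f` be piecewise linear functions given by finite nonempty families
of affine segments on closed intervals with integer endpoints (the value at a point
of the domain being the minimum of the values of the segments containing it). Then
for every integer `q` whose feasible set `{(x, y) : x ∈ D_V, y ∈ D_f, x + y = q}`
is nonempty, the minimum of `V x + f y` over this set is attained at a pair
`(x, y)` with both `x` and `y = q - x` integer. -/
theorem stmt_8 {ι κ : Type*} [Fintype ι] [Fintype κ] [Nonempty ι] [Nonempty κ]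
    (k d : ι → ℝ) (p r : ι → ℤ) (hpr : ∀ l, p l ≤ r l)
    (k' d' : κ → ℝ) (p' r' : κ → ℤ) (hpr' : ∀ l, p' l ≤ r' l)
    (DV Df : Set ℝ)
    (hDV : DV = ⋃ l, Set.Icc ((p l : ℝ)) ((r l : ℝ)))
    (hDf : Df = ⋃ l, Set.Icc ((p' l : ℝ)) ((r' l : ℝ)))
    (V f : ℝ → ℝ)
    (hV : ∀ x ∈ DV,
      IsLeast {z | ∃ l, x ∈ Set.Icc ((p l : ℝ)) ((r l : ℝ)) ∧ z = k l * x + d l} (V x))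
    (hf : ∀ y ∈ Df,
      IsLeast {z | ∃ l, y ∈ Set.Icc ((p' l : ℝ)) ((r' l : ℝ)) ∧ z = k' l * y + d' l} (f y))
    (q : ℤ) (hfeas : ∃ x ∈ DV, ∃ y ∈ Df, x + y = (q : ℝ)) :
    ∃ x ∈ DV, ∃ y ∈ Df, x + y = (q : ℝ) ∧
      (∃ m : ℤ, (m : ℝ) = x) ∧ (∃ m : ℤ, (m : ℝ) = y) ∧
      ∀ x' ∈ DV, ∀ y' ∈ Df, x' + y' = (q : ℝ) → V x + f y ≤ V x' + f y' :=
  stmt_8_general k d p r k' d' p' r' DV Df hDV hDf V f hV hf q hfeas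
end

section
/- Let K ≥ 1, let v, w : {1, ..., K} → ℝ with v_k ≥ 0 and w_k > 0 for all k, and let W ≥ 0. Then sup { Σ_{k : z_k ≥ w_k} v_k : z : {1,...,K} → ℝ, z_k ≥ 0 for all k, Σ_k z_k ≤ W } = max { Σ_{k ∈ S} v_k : S ⊆ {1,...,K}, Σ_{k ∈ S} w_k ≤ W }, and the supremum is attained. -/
/-!
An admissible `z` reaches the thresholds of the items in `S = {k | w k ≤ z k}`, so
`∑_{k ∈ S} w k ≤ ∑_{k ∈ S} z k ≤ W` and `S` is a feasible knapsack; conversely a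
feasible knapsack `S` is realised by `z = w` on `S` and `z = 0` elsewhere, which reaches
no threshold outside `S` because the weights are positive. Hence both problems have the
same set of attainable profits, which is finite (one value per subset) and contains the
empty knapsack's `0`, so its supremum is attained.
-/

open Finset

variable {ι α β : Type*} [AddCommMonoid α] [PartialOrder α] [AddCommMonoid β]

def thresholdProfits [DecidableLE α] (I : Finset ι) (v : ι → β) (w : ι → α) (W : α) :
    Set β :=
  {t | ∃ z : ι → α, (∀ k ∈ I, 0 ≤ z k) ∧ ∑ k ∈ I, z k ≤ W ∧
    t = ∑ k ∈ I.filter (fun k => w k ≤ z k), v k}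

def knapsackProfits (I : Finset ι) (v : ι → β) (w : ι → α) (W : α) : Set β :=
  {t | ∃ S : Finset ι, S ⊆ I ∧ ∑ k ∈ S, w k ≤ W ∧ t = ∑ k ∈ S, v k}

theorem knapsackProfits_finite (I : Finset ι) (v : ι → β) (w : ι → α) (W : α) :
    (knapsackProfits I v w W).Finite := by
  refine (I.powerset.finite_toSet.image fun S => ∑ k ∈ S, v k).subset ?_
  rintro t ⟨S, hSI, -, rfl⟩
  exact ⟨S, mem_powerset.mpr hSI, rfl⟩

theorem zero_mem_knapsackProfits (I : Finset ι) (v : ι → β) (w : ι → α) {W : α}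
    (hW : 0 ≤ W) :
    0 ∈ knapsackProfits I v w W :=
  ⟨∅, empty_subset I, by simpa using hW, by simp⟩

theorem thresholdProfits_subset_knapsackProfits [IsOrderedAddMonoid α] [DecidableLE α]
    (I : Finset ι) (v : ι → β) (w : ι → α) (W : α) :
    thresholdProfits I v w W ⊆ knapsackProfits I v w W := by
  rintro t ⟨z, hz, hzW, rfl⟩
  refine ⟨I.filter fun k => w k ≤ z k, filter_subset _ _, ?_, rfl⟩
  calc ∑ k ∈ I.filter (fun k => w k ≤ z k), w k
      ≤ ∑ k ∈ I.filter (fun k => w k ≤ z k), z k :=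
        sum_le_sum fun k hk => (mem_filter.mp hk).2
    _ ≤ ∑ k ∈ I, z k :=
        sum_le_sum_of_subset_of_nonneg (filter_subset _ _) fun k hk _ => hz k hk
    _ ≤ W := hzW

theorem knapsackProfits_subset_thresholdProfits [DecidableLE α] {I : Finset ι} (v : ι → β)
    {w : ι → α} (hw : ∀ k ∈ I, 0 < w k) (W : α) :
    knapsackProfits I v w W ⊆ thresholdProfits I v w W := by
  rintro t ⟨S, hSI, hSW, rfl⟩
  have hfilter : I.filter (fun k => w k ≤ (S : Set ι).indicator w k) = S := by
    ext k
    by_cases hkS : k ∈ S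
    · simp [hkS, hSI hkS]
    · simpa [hkS] using fun hkI => (hw k hkI).not_ge
  refine ⟨(S : Set ι).indicator w, fun k hk => ?_, ?_, by rw [hfilter]⟩
  · exact Set.indicator_nonneg (fun k hkS => (hw k (hSI hkS)).le) k
  · rwa [sum_indicator_subset w hSI]

theorem thresholdProfits_eq_knapsackProfits [IsOrderedAddMonoid α] [DecidableLE α]
    {I : Finset ι} (v : ι → β) {w : ι → α} (hw : ∀ k ∈ I, 0 < w k) (W : α) :
    thresholdProfits I v w W = knapsackProfits I v w W :=
  (thresholdProfits_subset_knapsackProfits I v w W).antisymm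
    (knapsackProfits_subset_thresholdProfits v hw W)

theorem stmt_11_general (K : ℕ) (v w : ℕ → ℝ)
    (hw : ∀ k ∈ Finset.Icc 1 K, 0 < w k)
    (W : ℝ) (hW : 0 ≤ W) :
    sSup {t : ℝ | ∃ z : ℕ → ℝ, (∀ k ∈ Finset.Icc 1 K, 0 ≤ z k) ∧
        (∑ k ∈ Finset.Icc 1 K, z k) ≤ W ∧
        t = ∑ k ∈ (Finset.Icc 1 K).filter (fun k => w k ≤ z k), v k} =
      sSup {t : ℝ | ∃ S : Finset ℕ, S ⊆ Finset.Icc 1 K ∧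
        (∑ k ∈ S, w k) ≤ W ∧ t = ∑ k ∈ S, v k} ∧
    sSup {t : ℝ | ∃ z : ℕ → ℝ, (∀ k ∈ Finset.Icc 1 K, 0 ≤ z k) ∧
        (∑ k ∈ Finset.Icc 1 K, z k) ≤ W ∧
        t = ∑ k ∈ (Finset.Icc 1 K).filter (fun k => w k ≤ z k), v k} ∈
      {t : ℝ | ∃ z : ℕ → ℝ, (∀ k ∈ Finset.Icc 1 K, 0 ≤ z k) ∧
        (∑ k ∈ Finset.Icc 1 K, z k) ≤ W ∧
        t = ∑ k ∈ (Finset.Icc 1 K).filter (fun k => w k ≤ z k), v k} ∧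
    sSup {t : ℝ | ∃ S : Finset ℕ, S ⊆ Finset.Icc 1 K ∧
        (∑ k ∈ S, w k) ≤ W ∧ t = ∑ k ∈ S, v k} ∈
      {t : ℝ | ∃ S : Finset ℕ, S ⊆ Finset.Icc 1 K ∧
        (∑ k ∈ S, w k) ≤ W ∧ t = ∑ k ∈ S, v k} := by
  change sSup (thresholdProfits _ v w W) = sSup (knapsackProfits _ v w W) ∧
    sSup (thresholdProfits _ v w W) ∈ thresholdProfits _ v w W ∧
    sSup (knapsackProfits _ v w W) ∈ knapsackProfits _ v w W
  have hmem : sSup (knapsackProfits (Icc 1 K) v w W) ∈ knapsackProfits (Icc 1 K) v w W :=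
    Set.Nonempty.csSup_mem ⟨0, zero_mem_knapsackProfits _ v w hW⟩
      (knapsackProfits_finite _ v w W)
  rw [thresholdProfits_eq_knapsackProfits v hw W]
  exact ⟨rfl, hmem, hmem⟩

/-- Knapsack reduction with threshold profits: the supremum, over nonnegative
`z` with `∑ z_k ≤ W`, of the sum of the values `v_k` of the items whose
threshold `w_k` is reached (`z_k ≥ w_k`), equals the optimal value of the 0-1
knapsack problem with values `v`, weights `w` and capacity `W`, and both
suprema are attained. -/
theorem stmt_11 (K : ℕ) (hK : 1 ≤ K) (v w : ℕ → ℝ)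
    (hv : ∀ k ∈ Finset.Icc 1 K, 0 ≤ v k) (hw : ∀ k ∈ Finset.Icc 1 K, 0 < w k)
    (W : ℝ) (hW : 0 ≤ W) :
    sSup {t : ℝ | ∃ z : ℕ → ℝ, (∀ k ∈ Finset.Icc 1 K, 0 ≤ z k) ∧
        (∑ k ∈ Finset.Icc 1 K, z k) ≤ W ∧
        t = ∑ k ∈ (Finset.Icc 1 K).filter (fun k => w k ≤ z k), v k} =
      sSup {t : ℝ | ∃ S : Finset ℕ, S ⊆ Finset.Icc 1 K ∧
        (∑ k ∈ S, w k) ≤ W ∧ t = ∑ k ∈ S, v k} ∧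
    sSup {t : ℝ | ∃ z : ℕ → ℝ, (∀ k ∈ Finset.Icc 1 K, 0 ≤ z k) ∧
        (∑ k ∈ Finset.Icc 1 K, z k) ≤ W ∧
        t = ∑ k ∈ (Finset.Icc 1 K).filter (fun k => w k ≤ z k), v k} ∈
      {t : ℝ | ∃ z : ℕ → ℝ, (∀ k ∈ Finset.Icc 1 K, 0 ≤ z k) ∧
        (∑ k ∈ Finset.Icc 1 K, z k) ≤ W ∧
        t = ∑ k ∈ (Finset.Icc 1 K).filter (fun k => w k ≤ z k), v k} ∧
    sSup {t : ℝ | ∃ S : Finset ℕ, S ⊆ Finset.Icc 1 K ∧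
        (∑ k ∈ S, w k) ≤ W ∧ t = ∑ k ∈ S, v k} ∈
      {t : ℝ | ∃ S : Finset ℕ, S ⊆ Finset.Icc 1 K ∧
        (∑ k ∈ S, w k) ≤ W ∧ t = ∑ k ∈ S, v k} :=
  stmt_11_general K v w hw W hW
end

section
/- Let K ≥ 1, let v, w : {1, ..., K} → ℝ with v_k ≥ 0 and w_k ≥ 0 for all k, and let W ≥ 0. Then sup { Σ_k v_k · z_k : z : {1,...,K} → ℝ, 0 ≤ z_k ≤ 1 for all k, Σ_{k : z_k > 0} w_k ≤ W } = max { Σ_{k ∈ S} v_k : S ⊆ {1,...,K}, Σ_{k ∈ S} w_k ≤ W }, and the supremum is attained at a binary vector z ∈ {0,1}^K. -/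
open scoped Classical

/-! Rounding every activated coordinate `z_k > 0` up to `1` keeps the activated set, hence the
weight constraint, and can only increase `∑ v_k z_k` because `v ≥ 0`. So every relaxed value is
dominated by a knapsack value, while indicator vectors of feasible sets show the converse; the
finitely many knapsack values have a maximum, which is therefore the maximum of both problems. -/

namespace Knapsack

variable {ι : Type*} (I : Finset ι) (v w : ι → ℝ) (W : ℝ)

def activationValues : Set ℝ :=
  {t | ∃ z : ι → ℝ, (∀ k ∈ I, 0 ≤ z k ∧ z k ≤ 1) ∧
    (∑ k ∈ I.filter (fun k => 0 < z k), w k) ≤ W ∧ t = ∑ k ∈ I, v k * z k}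

def knapsackValues : Set ℝ :=
  {t | ∃ S : Finset ι, S ⊆ I ∧ (∑ k ∈ S, w k) ≤ W ∧ t = ∑ k ∈ S, v k}

theorem knapsackValues_finite : (knapsackValues I v w W).Finite := by
  refine (I.powerset.image fun S => ∑ k ∈ S, v k).finite_toSet.subset ?_
  rintro t ⟨S, hS, -, rfl⟩
  exact Finset.mem_image_of_mem _ (Finset.mem_powerset.mpr hS)

theorem isGreatest_knapsackValues (hW : 0 ≤ W) :
    IsGreatest (knapsackValues I v w W) (sSup (knapsackValues I v w W)) :=
  have hne : (knapsackValues I v w W).Nonempty := ⟨0, ∅, by simp [hW]⟩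
  ⟨hne.csSup_mem (knapsackValues_finite I v w W),
    fun _ ht => le_csSup (knapsackValues_finite I v w W).bddAbove ht⟩

section indicator

variable {I} {S : Finset ι}

theorem indicator_eq_zero_or_one (k : ι) :
    (S : Set ι).indicator (1 : ι → ℝ) k = 0 ∨ (S : Set ι).indicator (1 : ι → ℝ) k = 1 := by
  by_cases hk : k ∈ S <;> simp [hk]

theorem indicator_nonneg_and_le_one (k : ι) :
    0 ≤ (S : Set ι).indicator (1 : ι → ℝ) k ∧ (S : Set ι).indicator (1 : ι → ℝ) k ≤ 1 := by
  rcases indicator_eq_zero_or_one (S := S) k with h | h <;> simp [h]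

theorem filter_indicator_pos (hS : S ⊆ I) :
    I.filter (fun k => 0 < (S : Set ι).indicator (1 : ι → ℝ) k) = S := by
  ext k
  by_cases hk : k ∈ S
  · simp [hk, hS hk]
  · simp [hk]

theorem sum_mul_indicator (hS : S ⊆ I) :
    ∑ k ∈ I, v k * (S : Set ι).indicator 1 k = ∑ k ∈ S, v k := by
  rw [← Finset.sum_indicator_subset v hS]
  exact Finset.sum_congr rfl fun k _ => by by_cases hk : k ∈ S <;> simp [hk]

theorem sum_mem_activationValues (hS : S ⊆ I) (hwS : ∑ k ∈ S, w k ≤ W) :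
    ∑ k ∈ S, v k ∈ activationValues I v w W := by
  refine ⟨(S : Set ι).indicator 1, fun k _ => indicator_nonneg_and_le_one k, ?_,
    (sum_mul_indicator v hS).symm⟩
  rwa [filter_indicator_pos hS]

end indicator

theorem knapsackValues_subset_activationValues :
    knapsackValues I v w W ⊆ activationValues I v w W := by
  rintro t ⟨S, hS, hwS, rfl⟩
  exact sum_mem_activationValues v w W hS hwS

theorem exists_knapsackValue_ge (hv : ∀ k ∈ I, 0 ≤ v k) {t : ℝ}
    (ht : t ∈ activationValues I v w W) : ∃ s ∈ knapsackValues I v w W, t ≤ s := by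
  obtain ⟨z, hz, hwz, rfl⟩ := ht
  set S := I.filter fun k => 0 < z k
  refine ⟨∑ k ∈ S, v k, ⟨S, Finset.filter_subset _ _, hwz, rfl⟩, ?_⟩
  have hsupport : ∑ k ∈ S, v k * z k = ∑ k ∈ I, v k * z k :=
    Finset.sum_filter_of_ne fun k hk hne =>
      (hz k hk).1.lt_of_ne fun h => hne (by rw [← h, mul_zero])
  rw [← hsupport]
  refine Finset.sum_le_sum fun k hk => ?_
  have hkI := (Finset.mem_filter.mp hk).1
  exact mul_le_of_le_one_right (hv k hkI) (hz k hkI).2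

theorem isGreatest_activationValues {m : ℝ} (hv : ∀ k ∈ I, 0 ≤ v k)
    (hm : IsGreatest (knapsackValues I v w W) m) :
    IsGreatest (activationValues I v w W) m := by
  refine ⟨knapsackValues_subset_activationValues I v w W hm.1, fun t ht => ?_⟩
  obtain ⟨s, hs, hts⟩ := exists_knapsackValue_ge I v w W hv ht
  exact hts.trans (hm.2 hs)

end Knapsack

open Knapsack in
theorem stmt_12_general (K : ℕ) (v w : ℕ → ℝ)
    (hv : ∀ k ∈ Finset.Icc 1 K, 0 ≤ v k)
    (W : ℝ) (hW : 0 ≤ W) :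
    sSup {t : ℝ | ∃ z : ℕ → ℝ, (∀ k ∈ Finset.Icc 1 K, 0 ≤ z k ∧ z k ≤ 1) ∧
        (∑ k ∈ (Finset.Icc 1 K).filter (fun k => 0 < z k), w k) ≤ W ∧
        t = ∑ k ∈ Finset.Icc 1 K, v k * z k} =
      sSup {t : ℝ | ∃ S : Finset ℕ, S ⊆ Finset.Icc 1 K ∧
        (∑ k ∈ S, w k) ≤ W ∧ t = ∑ k ∈ S, v k} ∧
    sSup {t : ℝ | ∃ S : Finset ℕ, S ⊆ Finset.Icc 1 K ∧
        (∑ k ∈ S, w k) ≤ W ∧ t = ∑ k ∈ S, v k} ∈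
      {t : ℝ | ∃ S : Finset ℕ, S ⊆ Finset.Icc 1 K ∧
        (∑ k ∈ S, w k) ≤ W ∧ t = ∑ k ∈ S, v k} ∧
    ∃ z : ℕ → ℝ, (∀ k, z k = 0 ∨ z k = 1) ∧
      (∀ k ∈ Finset.Icc 1 K, 0 ≤ z k ∧ z k ≤ 1) ∧
      (∑ k ∈ (Finset.Icc 1 K).filter (fun k => 0 < z k), w k) ≤ W ∧
      (∑ k ∈ Finset.Icc 1 K, v k * z k) =
        sSup {t : ℝ | ∃ z' : ℕ → ℝ, (∀ k ∈ Finset.Icc 1 K, 0 ≤ z' k ∧ z' k ≤ 1) ∧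
          (∑ k ∈ (Finset.Icc 1 K).filter (fun k => 0 < z' k), w k) ≤ W ∧
          t = ∑ k ∈ Finset.Icc 1 K, v k * z' k} := by
  have hB := isGreatest_knapsackValues (Finset.Icc 1 K) v w W hW
  have hA := isGreatest_activationValues (Finset.Icc 1 K) v w W hv hB
  have hsup : sSup (activationValues (Finset.Icc 1 K) v w W) = _ := hA.csSup_eq
  refine ⟨hsup, hB.1, ?_⟩
  obtain ⟨S, hS, hwS, hSmax⟩ := hB.1
  refine ⟨(S : Set ℕ).indicator 1, indicator_eq_zero_or_one,
    fun k _ => indicator_nonneg_and_le_one k, ?_, ?_⟩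
  · rwa [filter_indicator_pos hS]
  · rw [sum_mul_indicator v hS, ← hSmax]
    exact hsup.symm

/-- Knapsack reduction with activation weights: the supremum, over `z` with
`0 ≤ z_k ≤ 1` and total activated weight `∑_{k : z_k > 0} w_k ≤ W`, of
`∑ v_k z_k`, equals the optimal value of the 0-1 knapsack problem with values
`v`, weights `w` and capacity `W`; the knapsack maximum is attained, and the
supremum is attained at a binary vector `z ∈ {0,1}^K`. -/
theorem stmt_12 (K : ℕ) (hK : 1 ≤ K) (v w : ℕ → ℝ)
    (hv : ∀ k ∈ Finset.Icc 1 K, 0 ≤ v k) (hw : ∀ k ∈ Finset.Icc 1 K, 0 ≤ w k)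
    (W : ℝ) (hW : 0 ≤ W) :
    sSup {t : ℝ | ∃ z : ℕ → ℝ, (∀ k ∈ Finset.Icc 1 K, 0 ≤ z k ∧ z k ≤ 1) ∧
        (∑ k ∈ (Finset.Icc 1 K).filter (fun k => 0 < z k), w k) ≤ W ∧
        t = ∑ k ∈ Finset.Icc 1 K, v k * z k} =
      sSup {t : ℝ | ∃ S : Finset ℕ, S ⊆ Finset.Icc 1 K ∧
        (∑ k ∈ S, w k) ≤ W ∧ t = ∑ k ∈ S, v k} ∧
    sSup {t : ℝ | ∃ S : Finset ℕ, S ⊆ Finset.Icc 1 K ∧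
        (∑ k ∈ S, w k) ≤ W ∧ t = ∑ k ∈ S, v k} ∈
      {t : ℝ | ∃ S : Finset ℕ, S ⊆ Finset.Icc 1 K ∧
        (∑ k ∈ S, w k) ≤ W ∧ t = ∑ k ∈ S, v k} ∧
    ∃ z : ℕ → ℝ, (∀ k, z k = 0 ∨ z k = 1) ∧
      (∀ k ∈ Finset.Icc 1 K, 0 ≤ z k ∧ z k ≤ 1) ∧
      (∑ k ∈ (Finset.Icc 1 K).filter (fun k => 0 < z k), w k) ≤ W ∧
      (∑ k ∈ Finset.Icc 1 K, v k * z k) =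
        sSup {t : ℝ | ∃ z' : ℕ → ℝ, (∀ k ∈ Finset.Icc 1 K, 0 ≤ z' k ∧ z' k ≤ 1) ∧
          (∑ k ∈ (Finset.Icc 1 K).filter (fun k => 0 < z' k), w k) ≤ W ∧
          t = ∑ k ∈ Finset.Icc 1 K, v k * z' k} :=
  stmt_12_general K v w hv W hW
end

section
/- Let K ≥ 1, let A : {1, ..., K} → ℝ with A_k > 0 for all k, and let B = (Σ_k A_k) / 2. Then the following are equivalent: (i) there exist a subset S ⊆ {1, ..., K} and z : S → ℝ with 0 ≤ z_k ≤ A_k for all k ∈ S, Σ_{k ∈ S} z_k = B, and Σ_{k ∈ S} (z_k − A_k) ≥ 0; (ii) there exists a subset Λ ⊆ {1, ..., K} with Σ_{k ∈ Λ} A_k = B. -/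
/-! Since `z ≤ A` on `S`, the condition `∑ (z - A) ≥ 0` forces `∑ z = ∑ A` over `S`, so `S`
itself is a balanced part; conversely, a balanced part `Λ` is loaded to full capacity `z = A`. -/

open Finset

theorem Finset.sum_eq_sum_of_le_of_sum_sub_nonneg {ι α : Type*} [AddCommGroup α] [PartialOrder α]
    [IsOrderedAddMonoid α] {s : Finset ι} {f g : ι → α} (hle : ∀ i ∈ s, f i ≤ g i)
    (hsub : 0 ≤ ∑ i ∈ s, (f i - g i)) : ∑ i ∈ s, f i = ∑ i ∈ s, g i :=
  le_antisymm (sum_le_sum hle) (by rwa [sum_sub_distrib, sub_nonneg] at hsub)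

theorem stmt_13_general (K : ℕ) (A : ℕ → ℝ)
    (hA : ∀ k ∈ Finset.Icc 1 K, 0 < A k)
    (B : ℝ) :
    (∃ S : Finset ℕ, S ⊆ Finset.Icc 1 K ∧ ∃ z : ℕ → ℝ,
        (∀ k ∈ S, 0 ≤ z k ∧ z k ≤ A k) ∧ (∑ k ∈ S, z k) = B ∧
        0 ≤ ∑ k ∈ S, (z k - A k)) ↔
      (∃ Λ : Finset ℕ, Λ ⊆ Finset.Icc 1 K ∧ (∑ k ∈ Λ, A k) = B) := by
  constructor
  · rintro ⟨S, hS, z, hz, hzB, hsub⟩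
    refine ⟨S, hS, ?_⟩
    rw [← hzB, sum_eq_sum_of_le_of_sum_sub_nonneg (fun k hk => (hz k hk).2) hsub]
  · rintro ⟨Λ, hΛ, hsum⟩
    exact ⟨Λ, hΛ, A, fun k hk => ⟨(hA k (hΛ hk)).le, le_rfl⟩, hsum, by simp⟩

/-- Number partitioning reduction: with `A_k > 0` and `B = (∑ A_k)/2`, there exist
a subset `S` and loads `0 ≤ z_k ≤ A_k` (`k ∈ S`) with `∑_{k ∈ S} z_k = B` and
`∑_{k ∈ S} (z_k - A_k) ≥ 0` if and only if there is a subset `Λ` with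
`∑_{k ∈ Λ} A_k = B`. -/
theorem stmt_13 (K : ℕ) (hK : 1 ≤ K) (A : ℕ → ℝ)
    (hA : ∀ k ∈ Finset.Icc 1 K, 0 < A k)
    (B : ℝ) (hB : B = (∑ k ∈ Finset.Icc 1 K, A k) / 2) :
    (∃ S : Finset ℕ, S ⊆ Finset.Icc 1 K ∧ ∃ z : ℕ → ℝ,
        (∀ k ∈ S, 0 ≤ z k ∧ z k ≤ A k) ∧ (∑ k ∈ S, z k) = B ∧
        0 ≤ ∑ k ∈ S, (z k - A k)) ↔
      (∃ Λ : Finset ℕ, Λ ⊆ Finset.Icc 1 K ∧ (∑ k ∈ Λ, A k) = B) :=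
  stmt_13_general K A hA B
end

section
/- Let n ≥ 2, let c_{ij} ∈ ℝ for 1 ≤ i < j ≤ n, let f_i : ℝ → ℝ and reals a_i ≤ 0 ≤ b_i for 1 ≤ i ≤ n, and let Q_max > 0. For 1 ≤ k ≤ n and q ∈ ℝ, define V_k(q) ∈ ℝ ∪ {+∞} as the infimum, over all m ≥ 1, all index sequences 1 = i_1 < i_2 < ... < i_m = k, and all y : {i_1, ..., i_m} → ℝ satisfying y_{i_l} ∈ [a_{i_l}, b_{i_l}] for each l, Σ_{l' ≤ l} y_{i_{l'}} ∈ [0, Q_max] for each l ≤ m, and Σ_{l=1}^{m} y_{i_l} = q, of the total cost Σ_{l=1}^{m-1} c_{i_l, i_{l+1}} + Σ_{l=1}^{m} f_{i_l}(y_{i_l}) (with infimum of the empty set equal to +∞). Then V_1(q) = f_1(q) for q ∈ [0, Q_max] ∩ [a_1, b_1] (and +∞ otherwise), and for every k with 2 ≤ k ≤ n and every q ∈ [0, Q_max]: V_k(q) = min_{1 ≤ j < k} inf { V_j(q − y) + c_{j,k} + f_k(y) : y ∈ [a_k, b_k], q − y ∈ [0, Q_max] }. -/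
/-!
A feasible route ending at `k ≠ 1` is a feasible route ending at its penultimate stop `j < k`
followed by the arc `j → k` and a final inventory change `y` at `k`, and conversely every such
extension is feasible; so the cost set for `(k, q)` is the union over `(j, y)` of the cost sets
for `(j, q - y)` shifted by `c j k + f k y`, and taking infima gives the recurrence. A route
ending at `1` consists of the start alone.
-/

open Finset

lemma EReal.sInf_le_sInf_add_coe {S T : Set EReal} {r : ℝ} (h : ∀ w ∈ S, w + r ∈ T) :
    sInf T ≤ sInf S + r := by
  have hsub : sInf T - r ≤ sInf S := le_sInf fun w hw => by
    rw [EReal.sub_le_iff_le_add (by simp) (by simp)]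
    exact sInf_le (h w hw)
  calc sInf T = sInf T - r + r := EReal.sub_add_cancel.symm
    _ ≤ sInf S + r := by gcongr

lemma Fin.Iic_last (n : ℕ) : Iic (Fin.last n) = univ := by
  ext; simp [Fin.le_last]

lemma Fin.strictMono_snoc {α : Type*} [Preorder α] {n : ℕ} {f : Fin (n + 1) → α}
    (hf : StrictMono f) {x : α} (hx : f (Fin.last n) < x) :
    StrictMono (Fin.snoc f x : Fin (n + 2) → α) := by
  simpa [Fin.insertNth_last'] using Fin.strictMono_insertNth_last hf x hx

section Routes

variable (c : ℕ → ℕ → ℝ) (f : ℕ → ℝ → ℝ) (a b : ℕ → ℝ) (Qmax : ℝ)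

def routeCost {m : ℕ} (i : Fin (m + 1) → ℕ) (y : Fin (m + 1) → ℝ) : ℝ :=
  (∑ l : Fin m, c (i l.castSucc) (i l.succ)) + ∑ l, f (i l) (y l)

def routeCostSet (k : ℕ) (q : ℝ) : Set EReal :=
  {z : EReal |
      ∃ m : ℕ, ∃ i : Fin (m + 1) → ℕ, StrictMono i ∧ i 0 = 1 ∧ i (Fin.last m) = k ∧
        ∃ y : Fin (m + 1) → ℝ,
          (∀ l, y l ∈ Set.Icc (a (i l)) (b (i l))) ∧
          (∀ l, (∑ l' ∈ Iic l, y l') ∈ Set.Icc 0 Qmax) ∧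
          (∑ l, y l) = q ∧
          z = (routeCost c f i y : EReal)}

variable {c f a b Qmax}

lemma routeCost_snoc {m : ℕ} (i : Fin (m + 1) → ℕ) (y : Fin (m + 1) → ℝ) (k : ℕ) (yk : ℝ) :
    routeCost c f (Fin.snoc i k : Fin (m + 2) → ℕ) (Fin.snoc y yk) =
      routeCost c f i y + c (i (Fin.last m)) k + f k yk := by
  rw [routeCost, Fin.sum_univ_castSucc, Fin.sum_univ_castSucc]
  simp only [Fin.snoc_castSucc, Fin.snoc_last, Fin.succ_castSucc, Fin.succ_last, routeCost]
  ring

lemma routeCostSet_one (q : ℝ) :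
    routeCostSet c f a b Qmax 1 q =
      {z : EReal | q ∈ Set.Icc 0 Qmax ∩ Set.Icc (a 1) (b 1) ∧ z = (f 1 q : EReal)} := by
  ext z
  constructor
  · rintro ⟨m, i, hmono, h0, hlast, y, hy, hpart, htot, rfl⟩
    obtain rfl : m = 0 := by
      simpa using congrArg Fin.val (hmono.injective (h0.trans hlast.symm)).symm
    have hy0 : y 0 = q := by simpa using htot
    have hq := hpart (Fin.last 0)
    rw [Fin.Iic_last, htot] at hq
    refine ⟨⟨hq, by simpa [h0, hy0] using hy 0⟩, ?_⟩
    simp [routeCost, h0, hy0]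
  · rintro ⟨⟨hq, hqab⟩, rfl⟩
    refine ⟨0, fun _ => 1, Subsingleton.strictMono (α := Fin 1) _, rfl, rfl, fun _ => q,
      fun _ => hqab, fun l => ?_, by simp, by simp [routeCost]⟩
    simpa [Fin.fin_one_eq_zero l] using hq

lemma add_mem_routeCostSet {j k : ℕ} {q y : ℝ} {w : EReal} (hjk : j < k)
    (hy : y ∈ Set.Icc (a k) (b k)) (hq : q ∈ Set.Icc 0 Qmax)
    (hw : w ∈ routeCostSet c f a b Qmax j (q - y)) :
    w + ((c j k + f k y : ℝ) : EReal) ∈ routeCostSet c f a b Qmax k q := by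
  obtain ⟨m, i, hmono, h0, rfl, yv, hyv, hpart, htot, rfl⟩ := hw
  refine ⟨m + 1, Fin.snoc i k, Fin.strictMono_snoc hmono hjk, ?_, by simp,
    Fin.snoc yv y, fun l => ?_, fun l => ?_, ?_, ?_⟩
  · rw [← Fin.castSucc_zero, Fin.snoc_castSucc]
    exact h0
  · induction l using Fin.lastCases with
    | last => simpa using hy
    | cast l => simpa using hyv l
  · induction l using Fin.lastCases with
    | last => simpa [Fin.Iic_last, Fin.sum_univ_castSucc, htot] using hq
    | cast l => simpa [Fin.sum_Iic_castSucc] using hpart l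
  · simp [Fin.sum_univ_castSucc, htot]
  · rw [routeCost_snoc, ← EReal.coe_add, add_assoc]

lemma exists_mem_routeCostSet_of_mem {k : ℕ} {q : ℝ} {z : EReal} (hk : k ≠ 1)
    (hz : z ∈ routeCostSet c f a b Qmax k q) :
    ∃ j, 1 ≤ j ∧ j < k ∧ ∃ y ∈ Set.Icc (a k) (b k), q - y ∈ Set.Icc 0 Qmax ∧
      ∃ w ∈ routeCostSet c f a b Qmax j (q - y), z = w + ((c j k + f k y : ℝ) : EReal) := by
  obtain ⟨m, i, hmono, h0, rfl, y, hy, hpart, htot, rfl⟩ := hz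
  obtain ⟨m, rfl⟩ : ∃ m', m = m' + 1 := Nat.exists_eq_succ_of_ne_zero (by rintro rfl; exact hk h0)
  have hinit : ∑ l, y (Fin.castSucc l) = q - y (Fin.last (m + 1)) := by
    rw [eq_sub_iff_add_eq, ← htot, Fin.sum_univ_castSucc y]
  refine ⟨i (Fin.last m).castSucc, h0.symm.trans_le (hmono.monotone (Fin.zero_le _)),
    hmono (Fin.castSucc_lt_last _), y (Fin.last _), hy _, ?_,
    _, ⟨m, Fin.init i, ?_, h0, rfl, Fin.init y, fun l => hy _, fun l => ?_, hinit, rfl⟩, ?_⟩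
  · simpa only [Fin.sum_Iic_castSucc, Fin.Iic_last, hinit] using hpart (Fin.last m).castSucc
  · exact hmono.comp (Fin.strictMono_castSucc)
  · exact Fin.sum_Iic_castSucc y l ▸ hpart l.castSucc
  · conv_lhs => rw [← Fin.snoc_init_self i, ← Fin.snoc_init_self y, routeCost_snoc]
    rw [← EReal.coe_add, add_assoc]
    rfl

lemma sInf_routeCostSet_eq {k : ℕ} {q : ℝ} (hk : k ≠ 1) (hq : q ∈ Set.Icc 0 Qmax) :
    sInf (routeCostSet c f a b Qmax k q) =
      sInf {z : EReal | ∃ j, 1 ≤ j ∧ j < k ∧ ∃ y ∈ Set.Icc (a k) (b k),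
        q - y ∈ Set.Icc 0 Qmax ∧
          z = sInf (routeCostSet c f a b Qmax j (q - y)) + (c j k : EReal) + (f k y : EReal)} := by
  apply le_antisymm
  · refine le_sInf ?_
    rintro _ ⟨j, -, hjk, y, hy, -, rfl⟩
    rw [add_assoc, ← EReal.coe_add]
    exact EReal.sInf_le_sInf_add_coe fun w hw => add_mem_routeCostSet hjk hy hq hw
  · refine le_sInf fun z hz => ?_
    obtain ⟨j, hj, hjk, y, hy, hqy, w, hw, rfl⟩ := exists_mem_routeCostSet_of_mem hk hz
    calc _ ≤ sInf (routeCostSet c f a b Qmax j (q - y)) + (c j k : EReal) + (f k y : EReal) :=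
          sInf_le (by exact ⟨j, hj, hjk, y, hy, hqy, rfl⟩)
      _ ≤ w + ((c j k + f k y : ℝ) : EReal) := by
          rw [add_assoc, ← EReal.coe_add]
          gcongr
          exact sInf_le hw

end Routes


theorem stmt_14_general (n : ℕ) (c : ℕ → ℕ → ℝ) (f : ℕ → ℝ → ℝ)
    (a b : ℕ → ℝ) (Qmax : ℝ)
    (V : ℕ → ℝ → EReal)
    (hV : ∀ k q, V k q = sInf {z : EReal |
      ∃ m : ℕ, ∃ i : Fin (m + 1) → ℕ, StrictMono i ∧ i 0 = 1 ∧ i (Fin.last m) = k ∧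
        ∃ y : Fin (m + 1) → ℝ,
          (∀ l, y l ∈ Set.Icc (a (i l)) (b (i l))) ∧
          (∀ l, (∑ l' ∈ Finset.Iic l, y l') ∈ Set.Icc (0 : ℝ) Qmax) ∧
          (∑ l, y l) = q ∧
          z = (((∑ l : Fin m, c (i l.castSucc) (i l.succ)) +
                ∑ l, f (i l) (y l) : ℝ) : EReal)}) :
    (∀ q : ℝ,
      (q ∈ Set.Icc (0 : ℝ) Qmax ∩ Set.Icc (a 1) (b 1) → V 1 q = ((f 1 q : ℝ) : EReal)) ∧
      (q ∉ Set.Icc (0 : ℝ) Qmax ∩ Set.Icc (a 1) (b 1) → V 1 q = ⊤)) ∧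
    (∀ k, 2 ≤ k → k ≤ n → ∀ q ∈ Set.Icc (0 : ℝ) Qmax,
      V k q = sInf {z : EReal | ∃ j, 1 ≤ j ∧ j < k ∧
        ∃ y ∈ Set.Icc (a k) (b k), q - y ∈ Set.Icc (0 : ℝ) Qmax ∧
          z = V j (q - y) + ((c j k : ℝ) : EReal) + ((f k y : ℝ) : EReal)}) := by
  have hV' : ∀ k q, V k q = sInf (routeCostSet c f a b Qmax k q) := hV
  refine ⟨fun q => ⟨fun hq => ?_, fun hq => ?_⟩, fun k hk _ q hq => ?_⟩
  · simp [hV', routeCostSet_one, hq]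
  · simp [hV', routeCostSet_one, hq]
  · simp only [hV']
    exact sInf_routeCostSet_eq (by omega) hq

/-- Dynamic programming recurrence for the ARELTP value functions without duration
constraint: `V k q` is the infimum (in `ℝ ∪ {+∞}`) over all subsequences
`1 = i₁ < i₂ < ⋯ < i_m = k` and feasible inventory changes `y` (pointwise bounds,
running load in `[0, Qmax]`, final load `q`) of the arc costs plus profit-change
values. Then `V 1 q = f 1 q` on `[0, Qmax] ∩ [a 1, b 1]` (and `+∞` otherwise), and
for `2 ≤ k ≤ n` and `q ∈ [0, Qmax]`,
`V k q = min_{1 ≤ j < k} inf_y { V j (q - y) + c j k + f k y }`. -/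
theorem stmt_14 (n : ℕ) (hn : 2 ≤ n) (c : ℕ → ℕ → ℝ) (f : ℕ → ℝ → ℝ)
    (a b : ℕ → ℝ) (hab : ∀ i, 1 ≤ i → i ≤ n → a i ≤ 0 ∧ 0 ≤ b i)
    (Qmax : ℝ) (hQ : 0 < Qmax)
    (V : ℕ → ℝ → EReal)
    (hV : ∀ k q, V k q = sInf {z : EReal |
      ∃ m : ℕ, ∃ i : Fin (m + 1) → ℕ, StrictMono i ∧ i 0 = 1 ∧ i (Fin.last m) = k ∧
        ∃ y : Fin (m + 1) → ℝ,
          (∀ l, y l ∈ Set.Icc (a (i l)) (b (i l))) ∧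
          (∀ l, (∑ l' ∈ Finset.Iic l, y l') ∈ Set.Icc (0 : ℝ) Qmax) ∧
          (∑ l, y l) = q ∧
          z = (((∑ l : Fin m, c (i l.castSucc) (i l.succ)) +
                ∑ l, f (i l) (y l) : ℝ) : EReal)}) :
    (∀ q : ℝ,
      (q ∈ Set.Icc (0 : ℝ) Qmax ∩ Set.Icc (a 1) (b 1) → V 1 q = ((f 1 q : ℝ) : EReal)) ∧
      (q ∉ Set.Icc (0 : ℝ) Qmax ∩ Set.Icc (a 1) (b 1) → V 1 q = ⊤)) ∧
    (∀ k, 2 ≤ k → k ≤ n → ∀ q ∈ Set.Icc (0 : ℝ) Qmax,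
      V k q = sInf {z : EReal | ∃ j, 1 ≤ j ∧ j < k ∧
        ∃ y ∈ Set.Icc (a k) (b k), q - y ∈ Set.Icc (0 : ℝ) Qmax ∧
          z = V j (q - y) + ((c j k : ℝ) : EReal) + ((f k y : ℝ) : EReal)}) :=
  stmt_14_general n c f a b Qmax V hV
end

section
/- Let N ≥ 1 and M ≥ 1, and for each i ∈ {1, ..., N} let a_{i,1} < a_{i,2} < ... < a_{i,M} be reals with a_{i,j} ∈ [j−1, j) for each j. For each i define f_i on [0, a_{i,M}] by f_i(y) = min { a_{i,j'} : 1 ≤ j' ≤ M, a_{i,j'} ≥ y }. Then for every j ∈ {1, ..., M} and every y ∈ [j−1, j) such that a_{i,j} ≥ y for at least one i: min_{i : y ≤ a_{i,M}} f_i(y) = min { a_{i,j} : 1 ≤ i ≤ N, a_{i,j} ≥ y }. -/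
/-!
For `y ≥ j - 1`, the smallest element of a row lying above `y` has index at least `j`, since
earlier elements are below `j - 1`. If `y ≤ a i j` it is therefore `a i j`; otherwise its index
exceeds `j`, so it is at least `j` and lies above the `j`-th element of every row. Hence rows
with `a i j < y` never attain the envelope, and the others contribute exactly `a i j`.
-/

theorem Nat.le_of_cast_sub_one_lt {R : Type*} [Ring R] [LinearOrder R] [IsStrictOrderedRing R]
    {j k : ℕ} (h : (j : R) - 1 < k) : j ≤ k := by
  have : (j : R) < (k + 1 : ℕ) := by push_cast; exact sub_lt_iff_lt_add.mp h
  exact Nat.lt_succ_iff.mp (by exact_mod_cast this)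

def valuesAbove (b : ℕ → ℝ) (M : ℕ) (y : ℝ) : Set ℝ :=
  {z | ∃ k ∈ Finset.Icc 1 M, y ≤ b k ∧ z = b k}

section ValuesAbove

variable {M j : ℕ} {b : ℕ → ℝ} {y v : ℝ}
  (hb : ∀ k ∈ Finset.Icc 1 M, b k ∈ Set.Ico ((k : ℝ) - 1) k)
  (hv : IsLeast (valuesAbove b M y) v) (hy : (j : ℝ) - 1 ≤ y)
include hb hv hy

theorem IsLeast.exists_index_ge_of_valuesAbove :
    ∃ k ∈ Finset.Icc 1 M, j ≤ k ∧ y ≤ b k ∧ v = b k := by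
  obtain ⟨k, hk, hyk, rfl⟩ := hv.1
  exact ⟨k, hk, Nat.le_of_cast_sub_one_lt (R := ℝ) (by linarith [(hb k hk).2]), hyk, rfl⟩

theorem IsLeast.valuesAbove_eq_of_le (hmono : StrictMonoOn b (Finset.Icc 1 M : Set ℕ))
    (hj : j ∈ Finset.Icc 1 M) (hyj : y ≤ b j) : v = b j := by
  obtain ⟨k, hk, hjk, -, rfl⟩ := hv.exists_index_ge_of_valuesAbove hb hy
  exact le_antisymm (hv.2 ⟨j, hj, hyj, rfl⟩) (hmono.monotoneOn hj hk hjk)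

theorem IsLeast.le_valuesAbove_of_lt (hbj : b j < y) : (j : ℝ) ≤ v := by
  obtain ⟨k, hk, hjk, hyk, rfl⟩ := hv.exists_index_ge_of_valuesAbove hb hy
  have hjk' : j + 1 ≤ k := lt_of_le_of_ne hjk (by rintro rfl; linarith)
  have : (j : ℝ) + 1 ≤ k := by exact_mod_cast hjk'
  linarith [(hb k hk).1]

end ValuesAbove

theorem stmt_15_general (N M : ℕ) (a : ℕ → ℕ → ℝ)
    (hmono : ∀ i ∈ Finset.Icc 1 N, ∀ j ∈ Finset.Icc 1 M, ∀ j' ∈ Finset.Icc 1 M,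
      j < j' → a i j < a i j')
    (hrange : ∀ i ∈ Finset.Icc 1 N, ∀ j ∈ Finset.Icc 1 M,
      a i j ∈ Set.Ico ((j : ℝ) - 1) (j : ℝ))
    (f : ℕ → ℝ → ℝ)
    (hf : ∀ i ∈ Finset.Icc 1 N, ∀ y ∈ Set.Icc (0 : ℝ) (a i M),
      IsLeast {z : ℝ | ∃ j' ∈ Finset.Icc 1 M, y ≤ a i j' ∧ z = a i j'} (f i y))
    (j : ℕ) (hj : j ∈ Finset.Icc 1 M) (y : ℝ) (hy : y ∈ Set.Ico ((j : ℝ) - 1) (j : ℝ))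
    (hex : ∃ i ∈ Finset.Icc 1 N, y ≤ a i j) :
    sInf {z : ℝ | ∃ i ∈ Finset.Icc 1 N, y ≤ a i M ∧ z = f i y} =
      sInf {z : ℝ | ∃ i ∈ Finset.Icc 1 N, y ≤ a i j ∧ z = a i j} := by
  obtain ⟨i₀, hi₀, hyi₀⟩ := hex
  obtain ⟨h1j, hjM⟩ := Finset.mem_Icc.mp hj
  have hy₀ : 0 ≤ y := by
    have : (1 : ℝ) ≤ j := by exact_mod_cast h1j
    linarith [hy.1]
  have hrow : ∀ i ∈ Finset.Icc 1 N, StrictMonoOn (a i) (Finset.Icc 1 M : Set ℕ) := hmono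
  have hM_mem : M ∈ Finset.Icc 1 M := Finset.mem_Icc.mpr ⟨h1j.trans hjM, le_rfl⟩
  have hleast : ∀ i ∈ Finset.Icc 1 N, y ≤ a i M → IsLeast (valuesAbove (a i) M y) (f i y) :=
    fun i hi hyM ↦ hf i hi y ⟨hy₀, hyM⟩
  have heq : ∀ i ∈ Finset.Icc 1 N, y ≤ a i M → y ≤ a i j → f i y = a i j :=
    fun i hi hyM hyj ↦
      (hleast i hi hyM).valuesAbove_eq_of_le (hrange i hi) hy.1 (hrow i hi) hj hyj
  refine csInf_eq_csInf_of_forall_exists_le ?_ ?_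
  · rintro _ ⟨i, hi, hyM, rfl⟩
    rcases le_or_gt y (a i j) with hyj | hjy
    · exact ⟨a i j, ⟨i, hi, hyj, rfl⟩, (heq i hi hyM hyj).ge⟩
    · have hj_le : (j : ℝ) ≤ f i y :=
        (hleast i hi hyM).le_valuesAbove_of_lt (hrange i hi) hy.1 hjy
      exact ⟨a i₀ j, ⟨i₀, hi₀, hyi₀, rfl⟩, ((hrange i₀ hi₀ j hj).2.trans_le hj_le).le⟩
  · rintro _ ⟨i, hi, hyj, rfl⟩
    have hyM : y ≤ a i M := hyj.trans ((hrow i hi).monotoneOn hj hM_mem hjM)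
    exact ⟨f i y, ⟨i, hi, hyM, rfl⟩, (heq i hi hyM hyj).le⟩

/-- Reduction of sorting `M` sets of `N` numbers to a lower-envelope computation:
with `a i 1 < ⋯ < a i M` and `a i j ∈ [j-1, j)`, and `f i y` defined on
`[0, a i M]` as the smallest `a i j'` that is at least `y`, on each interval
`[j-1, j)` the lower envelope `min_{i : y ≤ a i M} f i y` equals
`min { a i j : a i j ≥ y }` (whenever the latter set is nonempty). -/
theorem stmt_15 (N M : ℕ) (hN : 1 ≤ N) (hM : 1 ≤ M) (a : ℕ → ℕ → ℝ)
    (hmono : ∀ i ∈ Finset.Icc 1 N, ∀ j ∈ Finset.Icc 1 M, ∀ j' ∈ Finset.Icc 1 M,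
      j < j' → a i j < a i j')
    (hrange : ∀ i ∈ Finset.Icc 1 N, ∀ j ∈ Finset.Icc 1 M,
      a i j ∈ Set.Ico ((j : ℝ) - 1) (j : ℝ))
    (f : ℕ → ℝ → ℝ)
    (hf : ∀ i ∈ Finset.Icc 1 N, ∀ y ∈ Set.Icc (0 : ℝ) (a i M),
      IsLeast {z : ℝ | ∃ j' ∈ Finset.Icc 1 M, y ≤ a i j' ∧ z = a i j'} (f i y))
    (j : ℕ) (hj : j ∈ Finset.Icc 1 M) (y : ℝ) (hy : y ∈ Set.Ico ((j : ℝ) - 1) (j : ℝ))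
    (hex : ∃ i ∈ Finset.Icc 1 N, y ≤ a i j) :
    sInf {z : ℝ | ∃ i ∈ Finset.Icc 1 N, y ≤ a i M ∧ z = f i y} =
      sInf {z : ℝ | ∃ i ∈ Finset.Icc 1 N, y ≤ a i j ∧ z = a i j} :=
  stmt_15_general N M a hmono hrange f hf j hj y hy hex
end

section
/- Let a ≤ b and c ≤ d be reals, and let k₁, d₁, k₂, d₂ ∈ ℝ with k₁ ≤ k₂. Define F(q) = min { (k₁·x + d₁) + (k₂·y + d₂) : x ∈ [a, b], y ∈ [c, d], x + y = q } for q ∈ [a + c, b + d]. Then F(q) = k₁·(q − c) + d₁ + k₂·c + d₂ for q ∈ [a + c, b + c], and F(q) = k₁·b + d₁ + k₂·(q − b) + d₂ for q ∈ [b + c, b + d]. -/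
/-!
Along the line `x + y = q` the objective equals `k₁ q + (k₂ - k₁) y + d₁ + d₂`, so since `k₁ ≤ k₂`
shifting mass from `y` to `x` never increases it: the minimum puts `y` as small as possible,
i.e. `y = c` while `q - c ≤ b`, and `x = b` once `x` hits its upper end.
-/

namespace AffineSuperposition

variable (k₁ d₁ k₂ d₂ a b c d : ℝ)

def feasibleValues (q : ℝ) : Set ℝ :=
  {z | ∃ x ∈ Set.Icc a b, ∃ y ∈ Set.Icc c d, x + y = q ∧ z = (k₁ * x + d₁) + (k₂ * y + d₂)}

variable {k₁ k₂ a b c d}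

theorem isLeast_feasibleValues_of_le_b_add_c (hcd : c ≤ d) (hk : k₁ ≤ k₂) {q : ℝ}
    (hq : q ∈ Set.Icc (a + c) (b + c)) :
    IsLeast (feasibleValues k₁ d₁ k₂ d₂ a b c d q) (k₁ * (q - c) + d₁ + k₂ * c + d₂) := by
  obtain ⟨hq₁, hq₂⟩ := hq
  refine ⟨⟨q - c, ⟨by linarith, by linarith⟩, c, ⟨le_rfl, hcd⟩, by ring, by ring⟩, ?_⟩
  rintro z ⟨x, -, y, ⟨hy, -⟩, rfl, rfl⟩
  have : 0 ≤ (k₂ - k₁) * (y - c) := mul_nonneg (sub_nonneg.2 hk) (sub_nonneg.2 hy)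
  linarith

theorem isLeast_feasibleValues_of_b_add_c_le (hab : a ≤ b) (hk : k₁ ≤ k₂) {q : ℝ}
    (hq : q ∈ Set.Icc (b + c) (b + d)) :
    IsLeast (feasibleValues k₁ d₁ k₂ d₂ a b c d q) (k₁ * b + d₁ + k₂ * (q - b) + d₂) := by
  obtain ⟨hq₁, hq₂⟩ := hq
  refine ⟨⟨b, ⟨hab, le_rfl⟩, q - b, ⟨by linarith, by linarith⟩, by ring, by ring⟩, ?_⟩
  rintro z ⟨x, ⟨-, hx⟩, y, -, rfl, rfl⟩
  have : 0 ≤ (k₂ - k₁) * (b - x) := mul_nonneg (sub_nonneg.2 hk) (sub_nonneg.2 hx)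
  linarith

end AffineSuperposition

open AffineSuperposition in
/-- Closed form of the superposition (infimal convolution) of two affine segments
`x ↦ k₁ x + d₁` on `[a, b]` and `y ↦ k₂ y + d₂` on `[c, d]` with `k₁ ≤ k₂`: on
`[a + c, b + c]` it equals `k₁ (q - c) + d₁ + k₂ c + d₂`, and on `[b + c, b + d]`
it equals `k₁ b + d₁ + k₂ (q - b) + d₂`. -/
theorem stmt_16 (a b c d k₁ d₁ k₂ d₂ : ℝ) (hab : a ≤ b) (hcd : c ≤ d) (hk : k₁ ≤ k₂)
    (F : ℝ → ℝ)
    (hF : ∀ q ∈ Set.Icc (a + c) (b + d),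
      F q = sInf {z : ℝ | ∃ x ∈ Set.Icc a b, ∃ y ∈ Set.Icc c d,
        x + y = q ∧ z = (k₁ * x + d₁) + (k₂ * y + d₂)}) :
    (∀ q ∈ Set.Icc (a + c) (b + c), F q = k₁ * (q - c) + d₁ + k₂ * c + d₂) ∧
    (∀ q ∈ Set.Icc (b + c) (b + d), F q = k₁ * b + d₁ + k₂ * (q - b) + d₂) := by
  constructor
  · rintro q hq
    rw [hF q ⟨hq.1, hq.2.trans (by linarith)⟩]
    exact (isLeast_feasibleValues_of_le_b_add_c d₁ d₂ hcd hk hq).csInf_eq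
  · rintro q hq
    rw [hF q ⟨le_trans (by linarith) hq.1, hq.2⟩]
    exact (isLeast_feasibleValues_of_b_add_c_le d₁ d₂ hab hk hq).csInf_eq
end
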